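/- arXiv:2603.21239 — 11 statements merged into one kernel-verified Lean document; each statement's English description precedes it below -/
import Mathlib

section
/- Let R be a finite ring, let U be a subgroup of the unit group R^× with -1 ∈ U, and let S ⊆ R with 0 ∉ S and U S U = S. Assume that the Cayley graph Γ(R,U) is connected. Then the Cayley graph Γ(R,S) is connected if and only if the smallest two-sided ideal of R containing S is all of R. -/
/-- The Cayley graph `Γ(R,S)` of a ring `R` with connection set `S`: distinct vertices
`a, b` are adjacent iff `a - b ∈ S` (symmetrized via `fromRel`; when `-S = S` this
agrees with the usual definition). -/
def cayleyGraph {R : Type*} [Ring R] (S : Set R) : SimpleGraph R :=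
  SimpleGraph.fromRel (fun a b => a - b ∈ S)

/-- The image in `R` of a subgroup `U` of the unit group `Rˣ`. -/
def unitsSet (R : Type*) [Ring R] (U : Subgroup Rˣ) : Set R :=
  (fun u : Rˣ => (u : R)) '' (U : Set Rˣ)

section Aux

variable {R : Type*} [Ring R]

lemma cayley_adj {S : Set R} {a b : R} :
    (cayleyGraph S).Adj a b ↔ a ≠ b ∧ (a - b ∈ S ∨ b - a ∈ S) := by
  simp [cayleyGraph, SimpleGraph.fromRel_adj]

lemma cayley_shift {S : Set R} (c : R) {a b : R} (w : (cayleyGraph S).Walk a b) :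
    (cayleyGraph S).Reachable (a + c) (b + c) := by
  induction w with
  | nil => exact SimpleGraph.Reachable.refl _
  | @cons a a' b h p ih =>
      refine SimpleGraph.Reachable.trans (SimpleGraph.Adj.reachable ?_) ih
      rw [cayley_adj] at h ⊢
      exact ⟨fun he => h.1 (add_right_cancel he), by simpa using h.2⟩

/-- If the additive closure of `S` is everything, the Cayley graph is connected. -/
lemma cayley_connected_of_closure {S : Set R}
    (hS : AddSubgroup.closure S = ⊤) : (cayleyGraph S).Connected := by
  let P : AddSubgroup R :=
    { carrier := {x | (cayleyGraph S).Reachable 0 x}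
      zero_mem' := SimpleGraph.Reachable.refl _
      add_mem' := by
        intro x y hx hy
        refine SimpleGraph.Reachable.trans hx ?_
        obtain ⟨w⟩ := hy
        simpa [add_comm] using cayley_shift x w
      neg_mem' := by
        intro x hx
        obtain ⟨w⟩ := hx
        have := cayley_shift (-x) w
        simpa using this.symm }
  have hP : ∀ x : R, (cayleyGraph S).Reachable 0 x := by
    intro x
    have : x ∈ P := by
      have hle : AddSubgroup.closure S ≤ P := by
        rw [AddSubgroup.closure_le]
        intro t ht
        by_cases h : t = 0
        · subst h; exact SimpleGraph.Reachable.refl _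
        · exact (SimpleGraph.Adj.reachable (by
            rw [cayley_adj]; exact ⟨Ne.symm h, Or.inr (by simpa using ht)⟩))
      exact hle (hS ▸ AddSubgroup.mem_top x)
    exact this
  haveI : Nonempty R := ⟨0⟩
  exact SimpleGraph.Connected.mk fun a b => (hP a).symm.trans (hP b)

lemma diff_mem_of_walk {S : Set R} {a b : R} (w : (cayleyGraph S).Walk a b) :
    b - a ∈ AddSubgroup.closure (S ∪ -S) := by
  induction w with
  | nil => simpa using AddSubgroup.zero_mem _
  | @cons a a' b h p ih =>
      have h1 : a' - a ∈ AddSubgroup.closure (S ∪ -S) := by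
        apply AddSubgroup.subset_closure
        rw [cayley_adj] at h
        rcases h.2 with h2 | h2
        · exact Or.inr (by simpa using h2)
        · exact Or.inl h2
      have := add_mem ih h1
      simpa using this

lemma closure_eq_top_of_connected {S : Set R}
    (h : (cayleyGraph S).Connected) : AddSubgroup.closure (S ∪ -S) = ⊤ := by
  rw [eq_top_iff]
  intro x _
  obtain ⟨w⟩ := h.preconnected 0 x
  simpa using diff_mem_of_walk w

end Aux

theorem stmt0 {R : Type*} [Ring R] [Fintype R]
    (U : Subgroup Rˣ) (hU : -1 ∈ U)
    (S : Set R) (h0 : (0 : R) ∉ S)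
    (hstab : ∀ u₁ ∈ U, ∀ u₂ ∈ U, ∀ s ∈ S, ((u₁ : Rˣ) : R) * s * ((u₂ : Rˣ) : R) ∈ S)
    (hconnU : (cayleyGraph (unitsSet R U)).Connected) :
    (cayleyGraph S).Connected ↔ TwoSidedIdeal.span S = ⊤ := by
  -- S is symmetric
  have hSneg : ∀ s ∈ S, -s ∈ S := by
    intro s hs
    have := hstab (-1) hU 1 U.one_mem s hs
    simpa using this
  have hScup : S ∪ -S = S := by
    apply Set.union_eq_self_of_subset_right
    intro a ha
    rw [Set.mem_neg] at ha
    simpa using hSneg _ ha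
  -- unitsSet is symmetric
  have hUcup : unitsSet R U ∪ -(unitsSet R U) = unitsSet R U := by
    apply Set.union_eq_self_of_subset_right
    intro a ha
    rw [Set.mem_neg] at ha
    obtain ⟨u, hu, hua⟩ := ha
    refine ⟨(-1) * u, U.mul_mem hU hu, ?_⟩
    simp [hua]
  -- every element of R lies in the additive closure of unitsSet
  have hRall : ∀ r : R, r ∈ AddSubgroup.closure (unitsSet R U) := by
    intro r
    have := closure_eq_top_of_connected hconnU
    rw [hUcup] at this
    rw [this]; trivial
  constructor
  · -- connected → span = ⊤
    intro hconn
    have hcl : AddSubgroup.closure S = ⊤ := by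
      have := closure_eq_top_of_connected hconn
      rwa [hScup] at this
    rw [eq_top_iff]
    intro x _
    -- additive subgroup structure of span S
    let P : AddSubgroup R :=
      { carrier := {y | y ∈ TwoSidedIdeal.span S}
        zero_mem' := TwoSidedIdeal.zero_mem (TwoSidedIdeal.span S)
        add_mem' := fun hx hy => TwoSidedIdeal.add_mem (TwoSidedIdeal.span S) hx hy
        neg_mem' := fun hx => TwoSidedIdeal.neg_mem (TwoSidedIdeal.span S) hx }
    have hle : AddSubgroup.closure S ≤ P := by
      rw [AddSubgroup.closure_le]
      exact TwoSidedIdeal.subset_span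
    exact hle (hcl ▸ AddSubgroup.mem_top x)
  · -- span = ⊤ → connected
    intro hspan
    apply cayley_connected_of_closure
    set A := AddSubgroup.closure S with hA
    -- A is stable under multiplication by elements of unitsSet
    have hmulU : ∀ u ∈ unitsSet R U, ∀ x ∈ A, u * x ∈ A ∧ x * u ∈ A := by
      rintro u ⟨v, hv, rfl⟩ x hx
      constructor
      · have hle : AddSubgroup.closure S ≤ A.comap (AddMonoidHom.mulLeft ((v : Rˣ) : R)) := by
          rw [AddSubgroup.closure_le]
          intro s hs
          have := hstab v hv 1 U.one_mem s hs
          simpa using AddSubgroup.subset_closure (G := R) (k := S) (by simpa using this)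
        exact hle hx
      · have hle : AddSubgroup.closure S ≤ A.comap (AddMonoidHom.mulRight ((v : Rˣ) : R)) := by
          rw [AddSubgroup.closure_le]
          intro s hs
          have := hstab 1 U.one_mem v hv s hs
          simpa using AddSubgroup.subset_closure (G := R) (k := S) (by simpa using this)
        exact hle hx
    -- A is stable under multiplication by any element of R
    have hmulL : ∀ (r : R), ∀ x ∈ A, r * x ∈ A := by
      intro r x hx
      have hle : AddSubgroup.closure (unitsSet R U) ≤ A.comap (AddMonoidHom.mulRight x) := by
        rw [AddSubgroup.closure_le]
        intro u hu
        exact (hmulU u hu x hx).1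
      exact hle (hRall r)
    have hmulR : ∀ (r : R), ∀ x ∈ A, x * r ∈ A := by
      intro r x hx
      have hle : AddSubgroup.closure (unitsSet R U) ≤ A.comap (AddMonoidHom.mulLeft x) := by
        rw [AddSubgroup.closure_le]
        intro u hu
        exact (hmulU u hu x hx).2
      exact hle (hRall r)
    -- build the two-sided ideal with carrier A
    let I : TwoSidedIdeal R := TwoSidedIdeal.mk' (A : Set R)
      A.zero_mem (fun hx hy => A.add_mem hx hy) (fun hx => A.neg_mem hx)
      (fun {x y} hy => hmulL x y hy) (fun {x y} hx => hmulR y x hx)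
    have hSI : S ⊆ (I : Set R) := by
      intro s hs
      rw [TwoSidedIdeal.coe_mk']
      exact AddSubgroup.subset_closure hs
    rw [eq_top_iff]
    intro x _
    have hx : x ∈ TwoSidedIdeal.span S := by rw [hspan]; trivial
    have := TwoSidedIdeal.mem_span_iff.mp hx I hSI
    rwa [TwoSidedIdeal.mem_mk'] at this
end

section
/- Let F be a finite field, let n ≥ 2, and let R = M_n(F) be the ring of n×n matrices over F. Let U be a subgroup of GL_n(F) with -I_n ∈ U such that the Cayley graph Γ(R,U) is connected, and let S ⊆ R be a nonempty subset with 0 ∉ S and U S U = S. Then the Cayley graph Γ(R,S) is connected. -/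
section CayleyGraph

variable {R : Type*} [Ring R] {S : Set R}

lemma cayleyGraph_reachable_iff {a b : R} :
    (cayleyGraph S).Reachable a b ↔ b - a ∈ AddSubgroup.closure S := by
  constructor
  · rintro ⟨w⟩
    induction w with
    | nil => simp
    | @cons a c b hadj _ ih =>
      have hca : c - a ∈ AddSubgroup.closure S := by
        rcases (SimpleGraph.fromRel_adj _ a c).1 hadj |>.2 with hac | hca
        · simpa using neg_mem (AddSubgroup.subset_closure hac)
        · exact AddSubgroup.subset_closure hca
      simpa using add_mem ih hca
  · intro h
    suffices ∀ x ∈ AddSubgroup.closure S, ∀ a, (cayleyGraph S).Reachable a (a + x) by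
      simpa using this _ h a
    intro x hx
    induction hx using AddSubgroup.closure_induction with
    | mem s hs =>
      intro a
      by_cases hs0 : s = 0
      · simp [hs0]
      · have hadj : (cayleyGraph S).Adj (a + s) a :=
          (SimpleGraph.fromRel_adj _ _ _).2 ⟨by simpa using hs0, .inl (by simpa using hs)⟩
        exact hadj.reachable.symm
    | zero => simp
    | add x y _ _ ihx ihy => exact fun a => (ihx a).trans (by simpa [add_assoc] using ihy (a + x))
    | neg x _ ihx => exact fun a => by simpa using (ihx (a + -x)).symm

lemma cayleyGraph_connected_iff :
    (cayleyGraph S).Connected ↔ AddSubgroup.closure S = ⊤ := by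
  rw [SimpleGraph.connected_iff, AddSubgroup.eq_top_iff']
  simp only [SimpleGraph.Preconnected, cayleyGraph_reachable_iff]
  exact ⟨fun h x => by simpa using h.1 0 x, fun h => ⟨fun _ _ => h _, inferInstance⟩⟩

end CayleyGraph

section AddSubgroupClosure

variable {R : Type*} [Ring R] {T : Set R}

lemma AddSubgroup.mul_mem_of_closure_eq_top (hT : AddSubgroup.closure T = ⊤)
    {A : AddSubgroup R} {a : R} (h : ∀ t ∈ T, t * a ∈ A) (r : R) : r * a ∈ A :=
  (AddSubgroup.closure_le (K := A.comap (AddMonoidHom.mulRight a))).2 h (hT ▸ mem_top r)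

lemma AddSubgroup.mul_mem_of_closure_eq_top' (hT : AddSubgroup.closure T = ⊤)
    {A : AddSubgroup R} {a : R} (h : ∀ t ∈ T, a * t ∈ A) (r : R) : a * r ∈ A :=
  (AddSubgroup.closure_le (K := A.comap (AddMonoidHom.mulLeft a))).2 h (hT ▸ mem_top r)

lemma mul_mul_mem_addSubgroupClosure {S : Set R} (hT : AddSubgroup.closure T = ⊤)
    (hS : ∀ t₁ ∈ T, ∀ t₂ ∈ T, ∀ s ∈ S, t₁ * s * t₂ ∈ S)
    (x y : R) {s : R} (hs : s ∈ S) :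
    x * s * y ∈ AddSubgroup.closure S := by
  rw [mul_assoc]
  refine AddSubgroup.mul_mem_of_closure_eq_top hT (fun t₁ ht₁ => ?_) x
  rw [← mul_assoc]
  exact AddSubgroup.mul_mem_of_closure_eq_top' hT
    (fun t₂ ht₂ => AddSubgroup.subset_closure (hS t₁ ht₁ t₂ ht₂ s hs)) y

lemma mem_addSubgroupClosure_of_mem_span {S : Set R} (hT : AddSubgroup.closure T = ⊤)
    (hS : ∀ t₁ ∈ T, ∀ t₂ ∈ T, ∀ s ∈ S, t₁ * s * t₂ ∈ S)
    {z : R} (hz : z ∈ TwoSidedIdeal.span S) :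
    z ∈ AddSubgroup.closure S := by
  rw [TwoSidedIdeal.mem_span_iff_mem_addSubgroup_closure] at hz
  refine (AddSubgroup.closure_le _).2 ?_ hz
  rintro - ⟨-, ⟨x, -, s, hs, rfl⟩, y, -, rfl⟩
  exact mul_mul_mem_addSubgroupClosure hT hS x y hs

lemma addSubgroupClosure_eq_top_of_isSimpleRing [IsSimpleRing R] {S : Set R}
    (hT : AddSubgroup.closure T = ⊤)
    (hS : ∀ t₁ ∈ T, ∀ t₂ ∈ T, ∀ s ∈ S, t₁ * s * t₂ ∈ S)
    {s : R} (hs : s ∈ S) (hs0 : s ≠ 0) :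
    AddSubgroup.closure S = ⊤ := by
  have h1 : 1 ∈ TwoSidedIdeal.span S :=
    IsSimpleRing.one_mem_of_ne_zero_mem _ hs0 (TwoSidedIdeal.subset_span hs)
  refine (AddSubgroup.eq_top_iff' _).2 fun z => mem_addSubgroupClosure_of_mem_span hT hS ?_
  simpa using (TwoSidedIdeal.span S).mul_mem_left z 1 h1

end AddSubgroupClosure

theorem stmt1_general {F : Type*} [Field F] {n : ℕ} (hn : 2 ≤ n)
    (U : Subgroup (Matrix (Fin n) (Fin n) F)ˣ)
    (hconnU : (cayleyGraph (unitsSet (Matrix (Fin n) (Fin n) F) U)).Connected)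
    (S : Set (Matrix (Fin n) (Fin n) F)) (hSne : S.Nonempty)
    (h0 : (0 : Matrix (Fin n) (Fin n) F) ∉ S)
    (hstab : ∀ u₁ ∈ U, ∀ u₂ ∈ U, ∀ s ∈ S,
      ((u₁ : (Matrix (Fin n) (Fin n) F)ˣ) : Matrix (Fin n) (Fin n) F) * s *
        ((u₂ : (Matrix (Fin n) (Fin n) F)ˣ) : Matrix (Fin n) (Fin n) F) ∈ S) :
    (cayleyGraph S).Connected := by
  have : Nonempty (Fin n) := ⟨⟨0, by omega⟩⟩
  rw [cayleyGraph_connected_iff] at hconnU ⊢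
  obtain ⟨s, hs⟩ := hSne
  refine addSubgroupClosure_eq_top_of_isSimpleRing hconnU ?_ hs (ne_of_mem_of_not_mem hs h0)
  rintro - ⟨u₁, hu₁, rfl⟩ - ⟨u₂, hu₂, rfl⟩
  exact hstab u₁ hu₁ u₂ hu₂

theorem stmt1 {F : Type*} [Field F] [Fintype F] {n : ℕ} (hn : 2 ≤ n)
    (U : Subgroup (Matrix (Fin n) (Fin n) F)ˣ) (hU : -1 ∈ U)
    (hconnU : (cayleyGraph (unitsSet (Matrix (Fin n) (Fin n) F) U)).Connected)
    (S : Set (Matrix (Fin n) (Fin n) F)) (hSne : S.Nonempty)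
    (h0 : (0 : Matrix (Fin n) (Fin n) F) ∉ S)
    (hstab : ∀ u₁ ∈ U, ∀ u₂ ∈ U, ∀ s ∈ S,
      ((u₁ : (Matrix (Fin n) (Fin n) F)ˣ) : Matrix (Fin n) (Fin n) F) * s *
        ((u₂ : (Matrix (Fin n) (Fin n) F)ˣ) : Matrix (Fin n) (Fin n) F) ∈ S) :
    (cayleyGraph S).Connected :=
  stmt1_general hn U hconnU S hSne h0 hstab
end

section
/- Let F be a finite field and n ≥ 2 an integer, and assume that -I_n has determinant 1 (i.e., char F = 2 or n is even). Then the Cayley graph Γ(M_n(F), SL_n(F)), whose vertices are the n×n matrices over F and in which distinct A, B are adjacent if and only if det(A - B) = 1, is connected. -/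
theorem stmt2 {F : Type*} [Field F] [Fintype F] {n : ℕ} (hn : 2 ≤ n)
    (hdet : (-1 : Matrix (Fin n) (Fin n) F).det = 1) :
    (cayleyGraph {A : Matrix (Fin n) (Fin n) F | A.det = 1}).Connected := by
  classical
  haveI : Nonempty (Fin n) := ⟨⟨0, by omega⟩⟩
  set S : Set (Matrix (Fin n) (Fin n) F) := {A | A.det = 1} with hS
  set G := cayleyGraph S with hG
  have adj_iff : ∀ a b, G.Adj a b ↔ a ≠ b ∧ (a - b ∈ S ∨ b - a ∈ S) := by
    intro a b
    rw [hG, cayleyGraph, SimpleGraph.fromRel_adj]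
  have adj_of_mem : ∀ a b : Matrix (Fin n) (Fin n) F, a - b ∈ S → G.Adj a b := by
    intro a b hab
    refine (adj_iff a b).mpr ⟨?_, Or.inl hab⟩
    intro h
    rw [h, sub_self] at hab
    have : (0 : F) = 1 := by simpa [hS, Matrix.det_zero] using hab
    exact zero_ne_one this
  -- translation graph homomorphism
  have trans : ∀ (c a b : Matrix (Fin n) (Fin n) F), G.Adj a b → G.Adj (a + c) (b + c) := by
    intro c a b hab
    rw [adj_iff] at hab ⊢
    obtain ⟨hne, h⟩ := hab
    refine ⟨by simpa using hne, by simpa using h⟩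
  have mapR : ∀ (c x y : Matrix (Fin n) (Fin n) F),
      G.Reachable x y → G.Reachable (x + c) (y + c) := by
    intro c x y h
    exact h.map (⟨fun a => a + c, fun h => trans c _ _ h⟩ : G →g G)
  -- reachability from 0 on the closure
  have reach : ∀ x ∈ AddSubgroup.closure S, G.Reachable 0 x := by
    intro x hx
    refine AddSubgroup.closure_induction (p := fun g _ => G.Reachable 0 g)
      ?_ (SimpleGraph.Reachable.refl 0) ?_ ?_ hx
    · intro y hy
      exact ((adj_of_mem y 0 (by simpa using hy)).reachable).symm
    · intro a b _ _ ha hb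
      have := mapR b 0 a ha
      rw [zero_add] at this
      exact hb.trans this
    · intro a _ ha
      have := mapR (-a) 0 a ha
      rw [zero_add, add_neg_cancel] at this
      exact this.symm
  -- S is closed under... membership of std basis matrices
  have h1S : (1 : Matrix (Fin n) (Fin n) F) ∈ S := by simp [hS]
  have hstd_ne : ∀ (i j : Fin n), i ≠ j → ∀ c : F,
      Matrix.single i j c ∈ AddSubgroup.closure S := by
    intro i j hij c
    have hT : Matrix.transvection i j c ∈ S := by
      simpa [hS] using Matrix.det_transvection_of_ne i j hij c
    have : Matrix.single i j c = Matrix.transvection i j c - 1 := by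
      rw [Matrix.transvection]; abel
    rw [this]
    exact sub_mem (AddSubgroup.subset_closure hT) (AddSubgroup.subset_closure h1S)
  have hstd : ∀ (i j : Fin n) (c : F),
      Matrix.single i j c ∈ AddSubgroup.closure S := by
    intro i j c
    rcases eq_or_ne i j with rfl | hij
    · haveI : Nontrivial (Fin n) := Fin.nontrivial_iff_two_le.mpr hn
      obtain ⟨j, hj⟩ := exists_ne i
      have hij : i ≠ j := fun h => hj h.symm
      set A := Matrix.transvection i j c * Matrix.transvection j i 1 with hA
      have hAS : A ∈ S := by
        simp [hS, hA, Matrix.det_mul, Matrix.det_transvection_of_ne i j hij,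
          Matrix.det_transvection_of_ne j i (Ne.symm hij)]
      have hAeq : A = Matrix.transvection j i 1 + Matrix.single i j c
          + Matrix.single i i c := by
        rw [hA, Matrix.transvection, Matrix.transvection, add_mul, mul_add, mul_add,
          Matrix.single_mul_single_same]
        simp only [one_mul, mul_one]
        abel
      have : Matrix.single i i c
          = A - Matrix.transvection j i 1 - Matrix.single i j c := by
        rw [hAeq]; abel
      rw [this]
      have hTS : Matrix.transvection j i 1 ∈ S := by
        simpa [hS] using Matrix.det_transvection_of_ne j i (Ne.symm hij) 1
      exact sub_mem (sub_mem (AddSubgroup.subset_closure hAS)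
        (AddSubgroup.subset_closure hTS)) (hstd_ne i j hij c)
    · exact hstd_ne i j hij c
  have htop : ∀ M : Matrix (Fin n) (Fin n) F, M ∈ AddSubgroup.closure S := by
    intro M
    rw [Matrix.matrix_eq_sum_single M]
    exact sum_mem fun i _ => sum_mem fun j _ => hstd i j _
  have hpre : G.Preconnected := by
    intro a b
    have := mapR a 0 (b - a) (reach _ (htop (b - a)))
    rwa [zero_add, sub_add_cancel] at this
  exact ⟨hpre⟩
end

section
/- Let F be a finite field, let n > 2, and let R = M_n(F). Let U be a subgroup of GL_n(F) with -I_n ∈ U such that the Cayley graph Γ(R,U) is connected, and let S ⊆ R satisfy 0 ∉ S, U S U = S, S ≠ ∅, and S ≠ R \ {0}. Then the Cayley graph Γ(R,S) is prime. -/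
/-- `X` is a homogeneous set of `G`. -/
def IsHomogeneousSet {V : Type*} (G : SimpleGraph V) (X : Set V) : Prop :=
  ∀ v ∉ X, (∀ x ∈ X, G.Adj v x) ∨ (∀ x ∈ X, ¬ G.Adj v x)

/-- A graph on a finite vertex set is prime if it has no nontrivial homogeneous set. -/
def IsPrimeGraph {V : Type*} [Fintype V] (G : SimpleGraph V) : Prop :=
  ¬ ∃ X : Set V, IsHomogeneousSet G X ∧ 2 ≤ X.ncard ∧ X.ncard < Fintype.card V

open Set Pointwise

section CayleyGraph

variable {R : Type*} [Ring R] {S : Set R}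

lemma cayleyGraph_adj_iff (h0 : (0 : R) ∉ S) (hsym : ∀ s ∈ S, -s ∈ S) {a b : R} :
    (cayleyGraph S).Adj a b ↔ a - b ∈ S := by
  refine (SimpleGraph.fromRel_adj _ a b).trans
    ⟨fun ⟨_, h⟩ => h.elim id fun h => ?_, fun h => ⟨?_, .inl h⟩⟩
  · simpa using hsym _ h
  · rintro rfl
    exact h0 (by simpa using h)

lemma neg_mem_compl_sdiff_zero (hsym : ∀ s ∈ S, -s ∈ S) : ∀ s ∈ Sᶜ \ {0}, -s ∈ Sᶜ \ {0} :=
  fun s ⟨hs, hs0⟩ => ⟨fun h => hs (by simpa using hsym _ h), by simpa using hs0⟩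

lemma compl_cayleyGraph (h0 : (0 : R) ∉ S) (hsym : ∀ s ∈ S, -s ∈ S) :
    (cayleyGraph S)ᶜ = cayleyGraph (Sᶜ \ {0}) := by
  ext a b
  rw [SimpleGraph.compl_adj, cayleyGraph_adj_iff h0 hsym,
    cayleyGraph_adj_iff (fun h => h.2 rfl) (neg_mem_compl_sdiff_zero hsym), mem_sdiff,
    mem_singleton_iff, sub_eq_zero]
  tauto

def cayleyGraphAddRight (S : Set R) (t : R) : cayleyGraph S ≃g cayleyGraph S where
  toEquiv := Equiv.addRight t
  map_rel_iff' {a b} := by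
    simp only [cayleyGraph, SimpleGraph.fromRel_adj, Equiv.coe_addRight, ne_eq, add_left_inj,
      add_sub_add_right_eq_sub]

lemma closure_eq_top_of_cayleyGraph_connected (hconn : (cayleyGraph S).Connected) :
    AddSubgroup.closure S = ⊤ := by
  refine (AddSubgroup.eq_top_iff' _).mpr fun r => ?_
  have hr := (SimpleGraph.reachable_iff_reflTransGen 0 r).mp (hconn.preconnected 0 r)
  induction hr with
  | refl => exact zero_mem _
  | @tail b c _ hbc hb =>
    obtain ⟨-, hbc | hcb⟩ := (SimpleGraph.fromRel_adj _ b c).mp hbc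
    · simpa using sub_mem hb (AddSubgroup.subset_closure hbc)
    · simpa using add_mem hb (AddSubgroup.subset_closure hcb)

lemma cayleyGraph_connected_of_closure_eq_top (h0 : (0 : R) ∉ S)
    (hgen : AddSubgroup.closure S = ⊤) : (cayleyGraph S).Connected := by
  have hreach (d : R) (hd : d ∈ AddSubgroup.closure S) (c : R) :
      (cayleyGraph S).Reachable c (c + d) := by
    induction hd using AddSubgroup.closure_induction generalizing c with
    | mem s hs =>
      refine SimpleGraph.Adj.reachable ((SimpleGraph.fromRel_adj _ _ _).mpr ⟨?_, .inr ?_⟩)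
      · simpa using fun h : s = 0 => h0 (h ▸ hs)
      · simpa using hs
    | zero => simp
    | add x y _ _ hx hy => exact (hx c).trans (by simpa [add_assoc] using hy (c + x))
    | neg x _ hx => simpa using (hx (c + -x)).symm
  refine SimpleGraph.connected_iff_exists_forall_reachable _ |>.mpr ⟨0, fun r => ?_⟩
  simpa using hreach r (hgen ▸ AddSubgroup.mem_top r) 0

end CayleyGraph

section Homogeneous

variable {V W : Type*} {G : SimpleGraph V} {X Y : Set V}

lemma IsHomogeneousSet.adj_iff (hX : IsHomogeneousSet G X) {v x y : V} (hv : v ∉ X)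
    (hx : x ∈ X) (hy : y ∈ X) : G.Adj v x ↔ G.Adj v y := by
  rcases hX v hv with h | h
  · exact iff_of_true (h x hx) (h y hy)
  · exact iff_of_false (h x hx) (h y hy)

lemma IsHomogeneousSet.compl (hX : IsHomogeneousSet G X) : IsHomogeneousSet Gᶜ X := by
  intro v hv
  rcases hX v hv with h | h
  · exact .inr fun x hx hadj => (SimpleGraph.compl_adj G v x).mp hadj |>.2 (h x hx)
  · exact .inl fun x hx => (SimpleGraph.compl_adj G v x).mpr ⟨fun hvx => hv (hvx ▸ hx), h x hx⟩

lemma IsHomogeneousSet.image {G' : SimpleGraph W} (e : G ≃g G') (hX : IsHomogeneousSet G X) :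
    IsHomogeneousSet G' (e '' X) := by
  intro v hv
  obtain ⟨w, rfl⟩ := e.surjective v
  have hw : w ∉ X := fun h => hv ⟨w, h, rfl⟩
  simp only [mem_image, forall_exists_index, and_imp, forall_apply_eq_imp_iff₂, e.map_adj_iff]
  exact hX w hw

lemma IsHomogeneousSet.union (hX : IsHomogeneousSet G X) (hY : IsHomogeneousSet G Y)
    (hXY : (X ∩ Y).Nonempty) : IsHomogeneousSet G (X ∪ Y) := by
  obtain ⟨w, hwX, hwY⟩ := hXY
  intro v hv
  rw [mem_union, not_or] at hv
  have hw : ∀ x ∈ X ∪ Y, G.Adj v x ↔ G.Adj v w := by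
    rintro x (hx | hx)
    exacts [hX.adj_iff hv.1 hx hwX, hY.adj_iff hv.2 hx hwY]
  by_cases h : G.Adj v w
  · exact .inl fun x hx => (hw x hx).mpr h
  · exact .inr fun x hx hvx => h ((hw x hx).mp hvx)

end Homogeneous

section Saturation

variable {A : Type*} [AddCommGroup A] {P : Set A} {H C : AddSubgroup A}

/-- `P \ H` is a union of cosets of `H`. -/
def SaturatedOff (P : Set A) (H : AddSubgroup A) : Prop :=
  ∀ a ∉ H, ∀ h ∈ H, a + h ∈ P ↔ a ∈ P

lemma SaturatedOff.mem_iff_mem_of_notMem (hH : SaturatedOff P H) (hC : SaturatedOff P C)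
    (hCH : ¬ C ≤ H) {x y : A} (hx : x ∈ H) (hy : y ∈ H) (hxC : x ∉ C) (hyC : y ∉ C) :
    x ∈ P ↔ y ∈ P := by
  obtain ⟨g, hgC, hgH⟩ := SetLike.not_le_iff_exists.mp hCH
  have hxg : x + g ∉ H := fun h => hgH (by simpa using H.sub_mem h hx)
  calc x ∈ P ↔ x + g ∈ P := (hC x hxC g hgC).symm
    _ ↔ x + g + (y - x) ∈ P := (hH _ hxg _ (H.sub_mem hy hx)).symm
    _ ↔ y + g ∈ P := by rw [show x + g + (y - x) = y + g by abel]
    _ ↔ y ∈ P := hC y hyC g hgC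

lemma SaturatedOff.mem_iff_mem (hH : SaturatedOff P H)
    (hsep : ∀ x ∈ H, x ≠ 0 → ∃ C : AddSubgroup A, SaturatedOff P C ∧ x ∉ C ∧ ¬ C ≤ H)
    {x y : A} (hx : x ∈ H) (hy : y ∈ H) (hx0 : x ≠ 0) (hy0 : y ≠ 0) : x ∈ P ↔ y ∈ P := by
  obtain ⟨C, hC, hxC, hCH⟩ := hsep x hx hx0
  by_cases hyC : y ∉ C
  · exact hH.mem_iff_mem_of_notMem hC hCH hx hy hxC hyC
  obtain ⟨C', hC', hyC', hC'H⟩ := hsep y hy hy0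
  by_cases hxC' : x ∉ C'
  · exact hH.mem_iff_mem_of_notMem hC' hC'H hx hy hxC' hyC'
  calc x ∈ P ↔ x + y ∈ P := (hC x hxC y (not_not.mp hyC)).symm
    _ ↔ y + x ∈ P := by rw [add_comm]
    _ ↔ y ∈ P := hC' y hyC' x (not_not.mp hxC')

end Saturation

section CayleyHomogeneous

variable {R : Type*} [Ring R] {S : Set R}

lemma IsHomogeneousSet.saturatedOff (h0 : (0 : R) ∉ S) (hsym : ∀ s ∈ S, -s ∈ S)
    {H : AddSubgroup R} (hH : IsHomogeneousSet (cayleyGraph S) H) : SaturatedOff S H := by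
  intro a ha h hh
  have := hH.adj_iff ha (H.neg_mem hh) H.zero_mem
  rwa [cayleyGraph_adj_iff h0 hsym, cayleyGraph_adj_iff h0 hsym, sub_neg_eq_add, sub_zero] at this

lemma ncard_le_ncard_of_isHomogeneousSet [Finite R] (h0 : (0 : R) ∉ S)
    (hsym : ∀ s ∈ S, -s ∈ S) (hconn : (cayleyGraph S).Connected) {M : Set R}
    (hM : IsHomogeneousSet (cayleyGraph S) M) (hne : M.Nonempty) (hM' : M ≠ univ) :
    M.ncard ≤ S.ncard := by
  obtain ⟨m, hm⟩ := hne
  obtain ⟨v, hv⟩ := (ne_univ_iff_exists_notMem M).mp hM'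
  obtain ⟨d, -, hd, hd'⟩ := (hconn.preconnected m v).some.exists_boundary_dart M hm hv
  have hsub : (d.snd - ·) '' M ⊆ S := by
    rintro _ ⟨x, hx, rfl⟩
    exact (cayleyGraph_adj_iff h0 hsym).mp ((hM.adj_iff hd' hd hx).mp d.adj.symm)
  calc M.ncard = ((d.snd - ·) '' M).ncard := (ncard_image_of_injective _ sub_right_injective).symm
    _ ≤ S.ncard := ncard_le_ncard hsub

lemma two_mul_ncard_lt_card_of_isHomogeneousSet [Fintype R] (h0 : (0 : R) ∉ S)
    (hsym : ∀ s ∈ S, -s ∈ S) (hS : (cayleyGraph S).Connected)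
    (hT : (cayleyGraph (Sᶜ \ {0})).Connected) {M : Set R}
    (hM : IsHomogeneousSet (cayleyGraph S) M) (hne : M.Nonempty) (hM' : M ≠ univ) :
    2 * M.ncard < Fintype.card R := by
  have hMS := ncard_le_ncard_of_isHomogeneousSet h0 hsym hS hM hne hM'
  have hMT := ncard_le_ncard_of_isHomogeneousSet (fun h => h.2 rfl)
    (neg_mem_compl_sdiff_zero hsym) hT (compl_cayleyGraph h0 hsym ▸ hM.compl) hne hM'
  have hcard : (Sᶜ \ {0}).ncard + 1 + S.ncard = Fintype.card R := by
    rw [ncard_sdiff_singleton_add_one (show (0 : R) ∈ Sᶜ from h0), ncard_compl_add_ncard,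
      Nat.card_eq_fintype_card]
  omega

lemma exists_addSubgroup_isHomogeneousSet [Fintype R]
    (hsmall : ∀ M : Set R, IsHomogeneousSet (cayleyGraph S) M → M.Nonempty → M ≠ univ →
      2 * M.ncard < Fintype.card R)
    {X : Set R} (hX : IsHomogeneousSet (cayleyGraph S) X) (h2 : 2 ≤ X.ncard)
    (hlt : X.ncard < Fintype.card R) :
    ∃ H : AddSubgroup R, IsHomogeneousSet (cayleyGraph S) H ∧ H ≠ ⊥ ∧ H ≠ ⊤ := by
  have htr (t : R) {Y : Set R} (hY : IsHomogeneousSet (cayleyGraph S) Y) :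
      IsHomogeneousSet (cayleyGraph S) ((· + t) '' Y) :=
    hY.image (cayleyGraphAddRight S t)
  have hcard (t : R) (Y : Set R) : ((· + t) '' Y).ncard = Y.ncard :=
    ncard_image_of_injective _ (add_left_injective t)
  have hcard_univ : (univ : Set R).ncard = Fintype.card R := by
    rw [ncard_univ, Nat.card_eq_fintype_card]
  let Fam := {Y : Set R | IsHomogeneousSet (cayleyGraph S) Y ∧ 0 ∈ Y ∧ 2 ≤ Y.ncard ∧ Y ≠ univ}
  obtain ⟨x₀, hx₀⟩ : X.Nonempty := nonempty_of_ncard_ne_zero (by omega)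
  have hX' : (· + -x₀) '' X ∈ Fam := by
    refine ⟨htr _ hX, ⟨x₀, hx₀, add_neg_cancel x₀⟩, (hcard _ X).symm ▸ h2, fun h => ?_⟩
    rw [← hcard (-x₀) X, h, hcard_univ] at hlt
    exact hlt.false
  obtain ⟨M, ⟨hM, hM0, hM2, hMU⟩, hmax⟩ := (toFinite Fam).exists_maximalFor ncard Fam ⟨_, hX'⟩
  have hsub (x : R) (hx : x ∈ M) : (· + -x) '' M ⊆ M := by
    have hle : M.ncard ≤ (M ∪ (· + -x) '' M).ncard := ncard_le_ncard subset_union_left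
    have hne : M ∪ (· + -x) '' M ≠ univ := by
      intro h
      have := ncard_union_le M ((· + -x) '' M)
      rw [h, hcard, hcard_univ] at this
      have := hsmall M hM ⟨0, hM0⟩ hMU
      omega
    have hunion : M ∪ (· + -x) '' M ∈ Fam :=
      ⟨hM.union (htr _ hM) ⟨0, hM0, x, hx, add_neg_cancel x⟩, .inl hM0, hM2.trans hle, hne⟩
    exact subset_union_right.trans (eq_of_subset_of_ncard_le subset_union_left (hmax hunion hle)).ge
  refine ⟨AddSubgroup.ofSub M ⟨0, hM0⟩ fun x hx y hy => hsub y hy ⟨x, hx, rfl⟩, hM, ?_, ?_⟩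
  · intro h
    have hM1 : M = {0} := congrArg SetLike.coe h
    rw [hM1, ncard_singleton] at hM2
    omega
  · exact fun h => hMU (congrArg SetLike.coe h)

end CayleyHomogeneous

section Biinvariant

variable {R : Type*} [Ring R] {U : Subgroup Rˣ} {S Q : Set R}

def IsUnitBiinvariant (U : Subgroup Rˣ) (S : Set R) : Prop :=
  ∀ u₁ ∈ U, ∀ u₂ ∈ U, ∀ s ∈ S, ((u₁ : Rˣ) : R) * s * ((u₂ : Rˣ) : R) ∈ S

def unitConj (u v : Rˣ) : R ≃+ R where
  toFun x := u * x * v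
  invFun x := ↑u⁻¹ * x * ↑v⁻¹
  left_inv x := by simp [mul_assoc]
  right_inv x := by simp [mul_assoc]
  map_add' x y := by simp [mul_add, add_mul]

lemma unitConj_apply (u v : Rˣ) (x : R) : unitConj u v x = u * x * v := rfl

lemma unitConj_symm_apply (u v : Rˣ) (x : R) : (unitConj u v).symm x = ↑u⁻¹ * x * ↑v⁻¹ := rfl

lemma IsUnitBiinvariant.mul_mul_mem_iff (hS : IsUnitBiinvariant U S) {u v : Rˣ} (hu : u ∈ U)
    (hv : v ∈ U) {x : R} : (u : R) * x * v ∈ S ↔ x ∈ S := by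
  refine ⟨fun h => ?_, hS u hu v hv x⟩
  simpa [mul_assoc] using hS u⁻¹ (inv_mem hu) v⁻¹ (inv_mem hv) _ h

lemma IsUnitBiinvariant.neg_mem (hS : IsUnitBiinvariant U S) (hU : -1 ∈ U) {s : R} (hs : s ∈ S) :
    -s ∈ S := by
  simpa using hS (-1) hU 1 U.one_mem s hs

lemma IsUnitBiinvariant.compl (hS : IsUnitBiinvariant U S) : IsUnitBiinvariant U Sᶜ :=
  fun _ hu _ hv _ hs h => hs ((hS.mul_mul_mem_iff hu hv).mp h)

lemma IsUnitBiinvariant.sdiff (hS : IsUnitBiinvariant U S) (hQ : IsUnitBiinvariant U Q) :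
    IsUnitBiinvariant U (S \ Q) :=
  fun u hu v hv _ ⟨hs, hq⟩ => ⟨hS u hu v hv _ hs, fun h => hq ((hQ.mul_mul_mem_iff hu hv).mp h)⟩

lemma isUnitBiinvariant_zero : IsUnitBiinvariant U ({0} : Set R) :=
  fun _ _ _ _ s hs => by simp [mem_singleton_iff.mp hs]

lemma IsUnitBiinvariant.addSubgroupClosure (hS : IsUnitBiinvariant U S) :
    IsUnitBiinvariant U (AddSubgroup.closure S) := by
  intro u hu v hv x hx
  have : AddSubgroup.closure S ≤ (AddSubgroup.closure S).comap (unitConj u v).toAddMonoidHom :=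
    (AddSubgroup.closure_le _).mpr fun s hs => AddSubgroup.subset_closure (hS u hu v hv s hs)
  exact this hx

lemma eq_bot_or_eq_top_of_isUnitBiinvariant [IsSimpleRing R]
    (hgen : AddSubgroup.closure (unitsSet R U) = ⊤) {W : AddSubgroup R}
    (hW : IsUnitBiinvariant U W) : W = ⊥ ∨ W = ⊤ := by
  have hmul_left {w : R} (hw : w ∈ W) (r : R) : r * w ∈ W := by
    have : AddSubgroup.closure (unitsSet R U) ≤ W.comap (AddMonoidHom.mulRight w) :=
      (AddSubgroup.closure_le _).mpr fun _ ⟨u, hu, hx⟩ => by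
        simpa [← hx] using hW u hu 1 U.one_mem w hw
    exact this (hgen ▸ AddSubgroup.mem_top r)
  have hmul_right {w : R} (hw : w ∈ W) (r : R) : w * r ∈ W := by
    have : AddSubgroup.closure (unitsSet R U) ≤ W.comap (AddMonoidHom.mulLeft w) :=
      (AddSubgroup.closure_le _).mpr fun _ ⟨u, hu, hx⟩ => by
        simpa [← hx] using hW 1 U.one_mem u hu w hw
    exact this (hgen ▸ AddSubgroup.mem_top r)
  let I : TwoSidedIdeal R := .mk' W W.zero_mem W.add_mem W.neg_mem
    (fun hy => hmul_left hy _) (fun hx => hmul_right hx _)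
  have hI (z : R) : z ∈ I ↔ z ∈ W := TwoSidedIdeal.mem_mk' ..
  rcases eq_bot_or_eq_top I with h | h
  · refine .inl ((AddSubgroup.eq_bot_iff_forall _).mpr fun z hz => ?_)
    simpa [h] using (hI z).mpr hz
  · exact .inr ((AddSubgroup.eq_top_iff' _).mpr fun z =>
      (hI z).mp (h ▸ TwoSidedIdeal.mem_top (x := z)))

lemma cayleyGraph_connected_of_isUnitBiinvariant [IsSimpleRing R]
    (hgen : AddSubgroup.closure (unitsSet R U) = ⊤) (h0 : (0 : R) ∉ S)
    (hS : IsUnitBiinvariant U S) (hne : S.Nonempty) : (cayleyGraph S).Connected := by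
  refine cayleyGraph_connected_of_closure_eq_top h0
    ((eq_bot_or_eq_top_of_isUnitBiinvariant hgen hS.addSubgroupClosure).resolve_left fun h => ?_)
  obtain ⟨s, hs⟩ := hne
  have : s ∈ AddSubgroup.closure S := AddSubgroup.subset_closure hs
  rw [h, AddSubgroup.mem_bot] at this
  exact h0 (this ▸ hs)

end Biinvariant

section Prime

variable {R : Type*} [Ring R] {U : Subgroup Rˣ} {S Q : Set R} {H : AddSubgroup R}

lemma SaturatedOff.map_unitConj (hQ : IsUnitBiinvariant U Q) (hsat : SaturatedOff Q H)
    {u v : Rˣ} (hu : u ∈ U) (hv : v ∈ U) :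
    SaturatedOff Q (H.map (unitConj u v).toAddMonoidHom) := by
  intro a ha c hc
  rw [AddSubgroup.mem_map_equiv] at ha hc
  have hac : a + c = unitConj u v ((unitConj u v).symm a + (unitConj u v).symm c) := by simp
  rw [hac, unitConj_apply, hQ.mul_mul_mem_iff hu hv, hsat _ ha _ hc, unitConj_symm_apply,
    hQ.mul_mul_mem_iff (inv_mem hu) (inv_mem hv)]

lemma iInf_map_unitConj_eq_bot [IsSimpleRing R] (hgen : AddSubgroup.closure (unitsSet R U) = ⊤)
    (htop : H ≠ ⊤) : ⨅ (u : U) (v : U), H.map (unitConj (u : Rˣ) v).toAddMonoidHom = ⊥ := by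
  refine (eq_bot_or_eq_top_of_isUnitBiinvariant hgen ?_).resolve_right fun h =>
    htop (eq_top_iff.mpr (h ▸ iInf_le_of_le 1 (iInf_le_of_le 1 fun x hx => ?_)))
  · intro u' hu' v' hv' x hx
    simp only [SetLike.mem_coe, AddSubgroup.mem_iInf, AddSubgroup.mem_map_equiv,
      unitConj_symm_apply] at hx ⊢
    intro u v
    simpa [mul_assoc] using
      hx ⟨u'⁻¹ * u, mul_mem (inv_mem hu') u.2⟩ ⟨v * v'⁻¹, mul_mem v.2 (inv_mem hv')⟩
  · rw [AddSubgroup.mem_map_equiv, unitConj_symm_apply] at hx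
    simpa using hx

lemma exists_saturatedOff_notMem [Finite R] [IsSimpleRing R]
    (hgen : AddSubgroup.closure (unitsSet R U) = ⊤) (hQ : IsUnitBiinvariant U Q)
    (hsat : SaturatedOff Q H) (htop : H ≠ ⊤) {x : R} (hx : x ∈ H) (hx0 : x ≠ 0) :
    ∃ C : AddSubgroup R, SaturatedOff Q C ∧ x ∉ C ∧ ¬ C ≤ H := by
  have hxW : x ∉ ⨅ (u : U) (v : U), H.map (unitConj (u : Rˣ) v).toAddMonoidHom := by
    rwa [iInf_map_unitConj_eq_bot hgen htop, AddSubgroup.mem_bot]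
  simp only [AddSubgroup.mem_iInf, not_forall] at hxW
  obtain ⟨u, v, hxC⟩ := hxW
  refine ⟨_, hsat.map_unitConj hQ u.2 v.2, hxC, fun hle => hxC ?_⟩
  rwa [AddSubgroup.eq_of_le_of_card_ge hle
    (AddSubgroup.card_map_of_injective (unitConj (u : Rˣ) v).injective).ge]

lemma eq_univ_of_saturatedOff [IsSimpleRing R] (hgen : AddSubgroup.closure (unitsSet R U) = ⊤)
    (hQ : IsUnitBiinvariant U Q) (hbot : H ≠ ⊥) (hHQ : (H : Set R) ⊆ Q)
    (hsat : SaturatedOff Q H) : Q = univ := by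
  have hK : IsUnitBiinvariant U (AddAction.stabilizer R Q) := by
    intro u hu v hv k hk
    rw [SetLike.mem_coe, AddAction.mem_stabilizer_set] at hk ⊢
    intro b
    have hb : u * k * v + b = u * (k + (unitConj u v).symm b) * v := by
      simp [unitConj_symm_apply, mul_add, add_mul, mul_assoc]
    rw [vadd_eq_add, hb, hQ.mul_mul_mem_iff hu hv, ← vadd_eq_add, hk, unitConj_symm_apply,
      hQ.mul_mul_mem_iff (inv_mem hu) (inv_mem hv)]
  have hHK : H ≤ AddAction.stabilizer R Q := by
    intro h hh
    refine AddAction.mem_stabilizer_set.mpr fun b => ?_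
    rw [vadd_eq_add, add_comm]
    by_cases hb : b ∈ H
    · exact iff_of_true (hHQ (H.add_mem hb hh)) (hHQ hb)
    · exact hsat b hb h hh
  have hKtop := (eq_bot_or_eq_top_of_isUnitBiinvariant hgen hK).resolve_left
    fun h => hbot (le_bot_iff.mp (h ▸ hHK))
  refine eq_univ_of_forall fun x => ?_
  have := AddAction.mem_stabilizer_set.mp (hKtop ▸ AddSubgroup.mem_top x) 0
  rw [vadd_eq_add, add_zero] at this
  exact this.mpr (hHQ H.zero_mem)

lemma eq_empty_or_eq_of_isHomogeneousSet_addSubgroup [Finite R] [IsSimpleRing R]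
    (hgen : AddSubgroup.closure (unitsSet R U) = ⊤) (h0 : (0 : R) ∉ S)
    (hsym : ∀ s ∈ S, -s ∈ S) (hS : IsUnitBiinvariant U S)
    (hH : IsHomogeneousSet (cayleyGraph S) H) (hbot : H ≠ ⊥) (htop : H ≠ ⊤) :
    S = ∅ ∨ S = univ \ {0} := by
  have hsat := hH.saturatedOff h0 hsym
  obtain ⟨x₀, hx₀0⟩ := (AddSubgroup.ne_bot_iff_exists_ne_zero).mp hbot
  let Q := {x : R | x = 0 ∨ (x ∈ S ↔ (x₀ : R) ∈ S)}
  have hQ : IsUnitBiinvariant U Q := by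
    rintro u hu v hv x (rfl | hx)
    · simp [Q]
    · exact .inr ((hS.mul_mul_mem_iff hu hv).trans hx)
  have hHQ : (H : Set R) ⊆ Q := fun x hx => or_iff_not_imp_left.mpr fun hx0 =>
    hsat.mem_iff_mem (fun _ hy hy0 => exists_saturatedOff_notMem hgen hS hsat htop hy hy0)
      hx x₀.2 hx0 (by simpa using hx₀0)
  have hsatQ : SaturatedOff Q H := by
    intro a ha h hh
    have ha0 : a ≠ 0 := fun h => ha (h ▸ H.zero_mem)
    have hah0 : a + h ≠ 0 := fun h' => ha (eq_neg_of_add_eq_zero_left h' ▸ H.neg_mem hh)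
    simp only [Q, mem_ofPred_eq, ha0, hah0, false_or, hsat a ha h hh]
  have hmem (x : R) (hx : x ≠ 0) : x ∈ S ↔ (x₀ : R) ∈ S :=
    ((eq_univ_of_saturatedOff hgen hQ hbot hHQ hsatQ ▸ mem_univ x : x ∈ Q)).resolve_left hx
  by_cases hx₀S : (x₀ : R) ∈ S
  · refine .inr (ext fun x => ⟨fun hx => ⟨trivial, fun h => h0 (h ▸ hx)⟩, fun hx => ?_⟩)
    exact (hmem x hx.2).mpr hx₀S
  · exact .inl (eq_empty_of_forall_notMem fun x hx => hx₀S ((hmem x fun h => h0 (h ▸ hx)).mp hx))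

theorem isPrimeGraph_cayleyGraph [Fintype R] [IsSimpleRing R] (hU : -1 ∈ U)
    (hgen : AddSubgroup.closure (unitsSet R U) = ⊤) (h0 : (0 : R) ∉ S)
    (hS : IsUnitBiinvariant U S) (hSne : S.Nonempty) (hSnc : S ≠ univ \ {0}) :
    IsPrimeGraph (cayleyGraph S) := by
  rintro ⟨X, hX, h2, hlt⟩
  have hsym (s : R) (hs : s ∈ S) : -s ∈ S := hS.neg_mem hU hs
  have hTne : (Sᶜ \ {0}).Nonempty := by
    refine nonempty_iff_ne_empty.mpr fun h => hSnc (ext fun x => ⟨?_, fun ⟨_, hx⟩ => ?_⟩)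
    · exact fun hx => ⟨trivial, fun h => h0 (mem_singleton_iff.mp h ▸ hx)⟩
    · by_contra hxS
      exact (h ▸ ⟨hxS, hx⟩ : x ∈ (∅ : Set R))
  have hsmall (M : Set R) := two_mul_ncard_lt_card_of_isHomogeneousSet (M := M) h0 hsym
    (cayleyGraph_connected_of_isUnitBiinvariant hgen h0 hS hSne)
    (cayleyGraph_connected_of_isUnitBiinvariant hgen (fun h => h.2 rfl)
      (hS.compl.sdiff isUnitBiinvariant_zero) hTne)
  obtain ⟨H, hH, hbot, htop⟩ := exists_addSubgroup_isHomogeneousSet hsmall hX h2 hlt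
  rcases eq_empty_or_eq_of_isHomogeneousSet_addSubgroup hgen h0 hsym hS hH hbot htop with h | h
  exacts [hSne.ne_empty h, hSnc h]

end Prime

theorem stmt4 {F : Type*} [Field F] [Fintype F] {n : ℕ} (hn : 2 < n)
    (U : Subgroup (Matrix (Fin n) (Fin n) F)ˣ) (hU : -1 ∈ U)
    (hconnU : (cayleyGraph (unitsSet (Matrix (Fin n) (Fin n) F) U)).Connected)
    (S : Set (Matrix (Fin n) (Fin n) F))
    (h0 : (0 : Matrix (Fin n) (Fin n) F) ∉ S)
    (hstab : ∀ u₁ ∈ U, ∀ u₂ ∈ U, ∀ s ∈ S,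
      ((u₁ : (Matrix (Fin n) (Fin n) F)ˣ) : Matrix (Fin n) (Fin n) F) * s *
        ((u₂ : (Matrix (Fin n) (Fin n) F)ˣ) : Matrix (Fin n) (Fin n) F) ∈ S)
    (hSne : S.Nonempty)
    (hSnc : S ≠ Set.univ \ {0}) :
    IsPrimeGraph (cayleyGraph S) := by
  have : Nonempty (Fin n) := ⟨⟨0, by omega⟩⟩
  exact isPrimeGraph_cayleyGraph hU (closure_eq_top_of_cayleyGraph_connected hconnU) h0 hstab
    hSne hSnc
end

section
/- Let R be a finite ring whose Jacobson radical is zero, and let U be a subgroup of R^× with -1 ∈ U. If the Cayley graph Γ(R,U) and its complement graph are both connected, then Γ(R,U) is prime. -/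
/-- The Jacobson radical: the intersection of all maximal left ideals. -/
def jacobsonRadical (R : Type*) [Ring R] : Ideal R :=
  sInf {I : Ideal R | I.IsMaximal}

/-!
When `Γ = Γ(R,U)` and its complement are connected, the union of two proper homogeneous sets
through a common vertex is again proper, so there is a greatest proper homogeneous set `H`
containing `0`. Translations and left multiplications by `U` are automorphisms of `Γ`, hence `H`
is an additive subgroup stable under `U`; as `U` generates `(R, +)` (connectivity of `Γ`), `H` is
a left ideal. Now `1 ∉ H` is adjacent to `0 ∈ H`, so to all of `H`: every `1 - h` with `h ∈ H`
is a unit, i.e. `H` lies in the Jacobson radical and `H = {0}`. But every nontrivial homogeneous set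
has a translate inside `H`.
-/

namespace IsHomogeneousSet

variable {V : Type*} {G : SimpleGraph V} {X Y : Set V}

lemma singleton (G : SimpleGraph V) (v : V) : IsHomogeneousSet G {v} := by
  intro w _
  by_cases h : G.Adj w v
  · exact Or.inl fun x hx => hx ▸ h
  · exact Or.inr fun x hx => hx ▸ h

lemma compl_s6 (hX : IsHomogeneousSet G X) : IsHomogeneousSet Gᶜ X := by
  intro v hv
  have hne : ∀ x ∈ X, v ≠ x := fun x hx h => hv (h ▸ hx)
  rcases hX v hv with h | h
  · exact Or.inr fun x hx hc => (G.compl_adj v x).mp hc |>.2 (h x hx)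
  · exact Or.inl fun x hx => (G.compl_adj v x).mpr ⟨hne x hx, h x hx⟩

lemma image_s6 (hX : IsHomogeneousSet G X) (φ : G ≃g G) : IsHomogeneousSet G (φ '' X) := by
  intro v hv
  obtain ⟨w, rfl⟩ := φ.surjective v
  have hw : w ∉ X := fun h => hv ⟨w, h, rfl⟩
  rcases hX w hw with h | h
  · exact Or.inl <| by rintro _ ⟨x, hx, rfl⟩; exact φ.map_adj_iff.mpr (h x hx)
  · exact Or.inr <| by rintro _ ⟨x, hx, rfl⟩; exact fun hadj => h x hx (φ.map_adj_iff.mp hadj)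

lemma union_s6 (hX : IsHomogeneousSet G X) (hY : IsHomogeneousSet G Y) {z : V} (hzX : z ∈ X)
    (hzY : z ∈ Y) : IsHomogeneousSet G (X ∪ Y) := by
  intro v hv
  rw [Set.mem_union, not_or] at hv
  rcases hX v hv.1 with hXa | hXn <;> rcases hY v hv.2 with hYa | hYn
  · exact Or.inl fun x hx => hx.elim (hXa x) (hYa x)
  · exact absurd (hXa z hzX) (hYn z hzY)
  · exact absurd (hYa z hzY) (hXn z hzX)
  · exact Or.inr fun x hx => hx.elim (hXn x) (hYn x)

end IsHomogeneousSet

lemma SimpleGraph.Preconnected.eq_univ_of_adj_closed {V : Type*} {G : SimpleGraph V}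
    (hG : G.Preconnected) {X : Set V} (hX : ∀ a b, G.Adj a b → a ∈ X → b ∈ X) {z : V}
    (hz : z ∈ X) : X = Set.univ := by
  refine Set.eq_univ_of_forall fun v => ?_
  obtain ⟨w⟩ := hG z v
  induction w with
  | nil => exact hz
  | cons h _ ih => exact ih (hX _ _ h hz)

section Connected

variable {V : Type*} {G : SimpleGraph V} {X Y : Set V}

/-- Every vertex outside `Y` lies in `X`, so it sees `a ∈ Y`, hence all of `Y`: no edge of `Gᶜ`
leaves `Y`. -/
lemma IsHomogeneousSet.eq_univ_of_union_eq_univ (hY : IsHomogeneousSet G Y)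
    (hcc : Gᶜ.Preconnected) (hcover : X ∪ Y = Set.univ) {z : V} (hz : z ∈ Y) {a : V}
    (ha : a ∉ X) (haX : ∀ x ∈ X, G.Adj a x) : Y = Set.univ := by
  have haY : a ∈ Y := (hcover ▸ Set.mem_univ a : a ∈ X ∪ Y).resolve_left ha
  refine hcc.eq_univ_of_adj_closed (fun p q hpq hp => ?_) hz
  by_contra hq
  have hqX : q ∈ X := (hcover ▸ Set.mem_univ q : q ∈ X ∪ Y).resolve_right hq
  rcases hY q hq with h | h
  · exact ((G.compl_adj p q).mp hpq).2 (h p hp).symm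
  · exact h a haY (haX q hqX).symm

lemma IsHomogeneousSet.union_ne_univ (hX : IsHomogeneousSet G X) (hY : IsHomogeneousSet G Y)
    (hc : G.Preconnected) (hcc : Gᶜ.Preconnected) {z : V} (hz : z ∈ Y)
    (hXu : X ≠ Set.univ) (hYu : Y ≠ Set.univ) : X ∪ Y ≠ Set.univ := by
  intro hcover
  obtain ⟨a, ha⟩ := (Set.ne_univ_iff_exists_notMem X).mp hXu
  rcases hX a ha with h | h
  · exact hYu (hY.eq_univ_of_union_eq_univ hcc hcover hz ha h)
  · refine hYu (hY.compl_s6.eq_univ_of_union_eq_univ (by rwa [compl_compl]) hcover hz ha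
      fun x hx => (G.compl_adj a x).mpr ⟨fun e => ha (e ▸ hx), h x hx⟩)

end Connected

def properHomogeneousSets {V : Type*} (G : SimpleGraph V) (v : V) : Set (Set V) :=
  {Z | IsHomogeneousSet G Z ∧ v ∈ Z ∧ Z ≠ Set.univ}

section Greatest

variable {V : Type*} {G : SimpleGraph V} {v : V} {H : Set V}

lemma exists_isGreatest_properHomogeneousSets [Finite V] [Nontrivial V] (hc : G.Preconnected)
    (hcc : Gᶜ.Preconnected) (v : V) : ∃ H, IsGreatest (properHomogeneousSets G v) H := by
  have hsingleton : {v} ∈ properHomogeneousSets G v :=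
    ⟨.singleton G v, rfl, fun h => by
      obtain ⟨w, hw⟩ := exists_ne v
      exact hw (h ▸ Set.mem_univ w : w ∈ ({v} : Set V))⟩
  obtain ⟨H, hHmax⟩ :=
    (Set.toFinite (properHomogeneousSets G v)).exists_maximal ⟨_, hsingleton⟩
  refine ⟨H, hHmax.prop, fun Z ⟨hZ, hvZ, hZu⟩ => ?_⟩
  obtain ⟨hH, hvH, hHu⟩ := hHmax.prop
  have hunion : H ∪ Z ∈ properHomogeneousSets G v :=
    ⟨hH.union_s6 hZ hvH hvZ, Or.inl hvH, hH.union_ne_univ hZ hc hcc hvZ hHu hZu⟩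
  exact Set.union_subset_iff.mp (hHmax.2 hunion Set.subset_union_left) |>.2

lemma IsGreatest.image_subset_of_properHomogeneousSets
    (hH : IsGreatest (properHomogeneousSets G v) H) {X : Set V} (hX : IsHomogeneousSet G X)
    (hXu : X ≠ Set.univ) (φ : G ≃g G) (hv : v ∈ φ '' X) : φ '' X ⊆ H :=
  hH.2 ⟨hX.image_s6 φ, hv, fun h => hXu <| Set.eq_univ_of_forall fun x =>
    φ.injective.mem_set_image.mp (h ▸ Set.mem_univ (φ x))⟩

end Greatest

section Ring

variable {R : Type*} [Ring R] {S : Set R}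

lemma cayleyGraph_adj {a b : R} :
    (cayleyGraph S).Adj a b ↔ a ≠ b ∧ (a - b ∈ S ∨ b - a ∈ S) :=
  SimpleGraph.fromRel_adj _ a b

def cayleyGraph.addRightIso (S : Set R) (c : R) : cayleyGraph S ≃g cayleyGraph S where
  toEquiv := Equiv.addRight c
  map_rel_iff' := by simp [cayleyGraph_adj]

def cayleyGraph.mulLeftIso (w : Rˣ) (hS : ∀ x, (w : R) * x ∈ S ↔ x ∈ S) :
    cayleyGraph S ≃g cayleyGraph S where
  toEquiv := Units.mulLeft w
  map_rel_iff' := by simp [cayleyGraph_adj, ← mul_sub, hS]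

lemma AddSubgroup.closure_eq_top_of_cayleyGraph_preconnected
    (h : (cayleyGraph S).Preconnected) : AddSubgroup.closure S = ⊤ := by
  refine eq_top_iff.mpr fun r _ => ?_
  obtain ⟨w⟩ := h 0 r
  suffices ∀ {a b : R}, (cayleyGraph S).Walk a b → b - a ∈ AddSubgroup.closure S by
    simpa using this w
  intro a b w
  induction w with
  | nil => simp
  | @cons a c b hac _ ih =>
    have hca : c - a ∈ AddSubgroup.closure S := by
      rcases (cayleyGraph_adj.mp hac).2 with h | h
      · simpa using neg_mem (AddSubgroup.subset_closure h)
      · exact AddSubgroup.subset_closure h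
    simpa using add_mem ih hca

lemma AddSubgroup.mul_mem_of_closure_eq_top_s6 {K : AddSubgroup R} (hS : AddSubgroup.closure S = ⊤)
    (hK : ∀ s ∈ S, ∀ h ∈ K, s * h ∈ K) (r : R) {h : R} (hh : h ∈ K) : r * h ∈ K := by
  induction (hS ▸ AddSubgroup.mem_top r : r ∈ AddSubgroup.closure S)
    using AddSubgroup.closure_induction with
  | mem s hs => exact hK s hs h hh
  | zero => simp
  | add a b _ _ ha hb => simpa [add_mul] using K.add_mem ha hb
  | neg a _ ha => simpa [neg_mul] using K.neg_mem ha

lemma Ideal.le_jacobson_bot_of_isUnit_one_sub {I : Ideal R} (h : ∀ x ∈ I, IsUnit (1 - x)) :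
    I ≤ (⊥ : Ideal R).jacobson := by
  intro x hx
  refine Ideal.mem_jacobson_iff.mpr fun y => ?_
  obtain ⟨z, hz⟩ := (h _ (I.neg_mem (I.mul_mem_left y hx))).exists_left_inv
  refine ⟨z, ?_⟩
  rw [Submodule.mem_bot, ← hz]
  noncomm_ring

lemma jacobsonRadical_eq_jacobson_bot : jacobsonRadical R = (⊥ : Ideal R).jacobson := by
  rw [Ideal.jacobson_bot, Ring.jacobson_eq_sInf_isMaximal]
  rfl

end Ring

section UnitsCayleyGraph

variable {R : Type*} [Ring R] {U : Subgroup Rˣ}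

lemma mem_unitsSet {x : R} : x ∈ unitsSet R U ↔ ∃ w ∈ U, (w : R) = x := Iff.rfl

lemma units_mul_mem_unitsSet_iff {w : Rˣ} (hw : w ∈ U) {x : R} :
    (w : R) * x ∈ unitsSet R U ↔ x ∈ unitsSet R U := by
  simp only [mem_unitsSet]
  constructor
  · rintro ⟨v, hv, hvx⟩
    refine ⟨w⁻¹ * v, U.mul_mem (U.inv_mem hw) hv, ?_⟩
    rw [Units.val_mul, hvx, Units.inv_mul_cancel_left]
  · rintro ⟨v, hv, rfl⟩
    exact ⟨w * v, U.mul_mem hw hv, Units.val_mul w v⟩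

lemma isUnit_sub_of_cayleyGraph_adj {a b : R} (h : (cayleyGraph (unitsSet R U)).Adj a b) :
    IsUnit (a - b) := by
  rcases (cayleyGraph_adj.mp h).2 with hab | hba
  · obtain ⟨w, -, hw⟩ := mem_unitsSet.mp hab
    exact hw ▸ w.isUnit
  · obtain ⟨w, -, hw⟩ := mem_unitsSet.mp hba
    rw [← neg_sub, ← hw]
    exact w.isUnit.neg

lemma isUnit_one_sub_of_isHomogeneousSet {I : Ideal R}
    (hI : IsHomogeneousSet (cayleyGraph (unitsSet R U)) I) (hIu : (I : Set R) ≠ Set.univ)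
    {x : R} (hx : x ∈ I) : IsUnit (1 - x) := by
  have h1 : (1 : R) ∉ I := fun h => hIu (by rw [(I.eq_top_iff_one).mpr h, Submodule.top_coe])
  have hadj : (cayleyGraph (unitsSet R U)).Adj 1 0 :=
    cayleyGraph_adj.mpr ⟨fun e => h1 (e ▸ I.zero_mem), Or.inl ⟨1, U.one_mem, by simp⟩⟩
  rcases hI 1 h1 with h | h
  · exact isUnit_sub_of_cayleyGraph_adj (h x hx)
  · exact absurd hadj (h 0 I.zero_mem)

variable {H : Set R}

lemma IsGreatest.add_neg_mem_of_cayleyGraph {a b : R}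
    (hH : IsGreatest (properHomogeneousSets (cayleyGraph (unitsSet R U)) 0) H)
    (ha : a ∈ H) (hb : b ∈ H) : a + -b ∈ H :=
  hH.image_subset_of_properHomogeneousSets hH.1.1 hH.1.2.2 (cayleyGraph.addRightIso _ (-b))
    ⟨b, hb, add_neg_cancel b⟩ ⟨a, ha, rfl⟩

lemma IsGreatest.units_mul_mem_of_cayleyGraph {w : Rˣ}
    (hH : IsGreatest (properHomogeneousSets (cayleyGraph (unitsSet R U)) 0) H)
    (hw : w ∈ U) {h : R} (hh : h ∈ H) : (w : R) * h ∈ H :=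
  hH.image_subset_of_properHomogeneousSets hH.1.1 hH.1.2.2
    (cayleyGraph.mulLeftIso w fun _ => units_mul_mem_unitsSet_iff hw)
    ⟨0, hH.1.2.1, mul_zero _⟩ ⟨h, hh, rfl⟩

lemma IsGreatest.exists_ideal_of_cayleyGraph
    (hH : IsGreatest (properHomogeneousSets (cayleyGraph (unitsSet R U)) 0) H)
    (hconn : (cayleyGraph (unitsSet R U)).Preconnected) : ∃ I : Ideal R, (I : Set R) = H := by
  let K : AddSubgroup R :=
    .ofSub H ⟨0, hH.1.2.1⟩ fun _ ha _ hb => hH.add_neg_mem_of_cayleyGraph ha hb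
  have hclosure := AddSubgroup.closure_eq_top_of_cayleyGraph_preconnected hconn
  have hunits : ∀ s ∈ unitsSet R U, ∀ h ∈ K, s * h ∈ K := by
    rintro _ ⟨w, hw, rfl⟩ h hh
    exact hH.units_mul_mem_of_cayleyGraph hw hh
  exact ⟨{ K.toAddSubmonoid with
    smul_mem' := fun r _ hh => K.mul_mem_of_closure_eq_top_s6 hclosure hunits r hh }, rfl⟩

end UnitsCayleyGraph

theorem stmt6_general {R : Type*} [Ring R] [Fintype R]
    (hrad : jacobsonRadical R = ⊥)
    (U : Subgroup Rˣ)
    (hconn : (cayleyGraph (unitsSet R U)).Connected)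
    (hanti : (cayleyGraph (unitsSet R U))ᶜ.Connected) :
    IsPrimeGraph (cayleyGraph (unitsSet R U)) := by
  rintro ⟨X, hX, hX2, hXlt⟩
  have : Nontrivial R := Fintype.one_lt_card_iff_nontrivial.mp (by omega)
  obtain ⟨x, hx⟩ : X.Nonempty := Set.nonempty_of_ncard_ne_zero (by omega)
  have hXu : X ≠ Set.univ := by rintro rfl; simp [Set.ncard_univ] at hXlt
  obtain ⟨H, hH⟩ :=
    exists_isGreatest_properHomogeneousSets hconn.preconnected hanti.preconnected (0 : R)
  let τ := cayleyGraph.addRightIso (unitsSet R U) (-x)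
  have hXH : τ '' X ⊆ H :=
    hH.image_subset_of_properHomogeneousSets hX hXu τ ⟨x, hx, add_neg_cancel x⟩
  obtain ⟨I, rfl⟩ := hH.exists_ideal_of_cayleyGraph hconn.preconnected
  have hI : I = ⊥ := by
    rw [← le_bot_iff, ← hrad, jacobsonRadical_eq_jacobson_bot]
    exact Ideal.le_jacobson_bot_of_isUnit_one_sub fun _ =>
      isUnit_one_sub_of_isHomogeneousSet hH.1.1 hH.1.2.2
  have hcard := Set.ncard_le_ncard hXH
  rw [Set.ncard_image_of_injective _ τ.injective, hI, Submodule.bot_coe,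
    Set.ncard_singleton] at hcard
  omega

theorem stmt6 {R : Type*} [Ring R] [Fintype R]
    (hrad : jacobsonRadical R = ⊥)
    (U : Subgroup Rˣ) (hU : -1 ∈ U)
    (hconn : (cayleyGraph (unitsSet R U)).Connected)
    (hanti : (cayleyGraph (unitsSet R U))ᶜ.Connected) :
    IsPrimeGraph (cayleyGraph (unitsSet R U)) :=
  stmt6_general hrad U hconn hanti
end

section
/- Let s, r ≥ 0 with s + r ≥ 1, let K_1, …, K_s and F_1, …, F_r be finite fields, let d_1, …, d_r be integers with each d_j ≥ 2, and let R = K_1 × ⋯ × K_s × M_{d_1}(F_1) × ⋯ × M_{d_r}(F_r). Then the unitary Cayley graph G_R is connected if and only if there is at most one index i ∈ {1,…,s} with |K_i| = 2. -/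
/-!
A walk of length `n` from `a` to `a + x` in `G_R` amounts to writing `x` as a sum of `n` units,
so `G_R` is connected iff every element is a sum of units. Units of a product are componentwise,
so in the product each component of `x` must be a sum of the same number `n` of units. In `𝔽₂`
the only unit is `1`, so there `x` is a sum of `n` units iff `n ≡ x (mod 2)`: one such factor
fixes the parity of `n`, two of them make `(1, 0)` unreachable. Every other factor allows all
large `n`: its units generate it as a ring (in `M_d(F)`, `d ≥ 2`, an off-diagonal matrix unit is
a transvection minus `1` and a diagonal one is a product of two off-diagonal ones), and `1` is a
sum of two units (explicit `2 × 2` and `3 × 3` examples, then block sums), which lets one summand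
be split into two.
-/

/-- The unitary Cayley graph of a ring `R`: distinct vertices `a, b` are adjacent iff
`a - b` is a unit. -/
def unitaryCayleyGraph (R : Type*) [Ring R] : SimpleGraph R :=
  SimpleGraph.fromRel (fun a b => IsUnit (a - b))

open Filter

inductive IsUnitSum {R : Type*} [Ring R] : ℕ → R → Prop
  | zero : IsUnitSum 0 0
  | succ {n : ℕ} {x u : R} : IsUnitSum n x → IsUnit u → IsUnitSum (n + 1) (x + u)

namespace IsUnitSum

variable {R S : Type*} [Ring R] [Ring S] {m n : ℕ} {x y : R}

theorem zero_iff : IsUnitSum 0 x ↔ x = 0 :=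
  ⟨by rintro ⟨⟩; rfl, by rintro rfl; exact zero⟩

theorem succ_iff : IsUnitSum (n + 1) x ↔ ∃ y u, IsUnitSum n y ∧ IsUnit u ∧ y + u = x :=
  ⟨by rintro ⟨⟩; exact ⟨_, _, ‹_›, ‹_›, rfl⟩, by rintro ⟨y, u, hy, hu, rfl⟩; exact hy.succ hu⟩

theorem of_isUnit (hx : IsUnit x) : IsUnitSum 1 x := by
  simpa using zero.succ hx

theorem add (hx : IsUnitSum m x) (hy : IsUnitSum n y) : IsUnitSum (m + n) (x + y) := by
  induction hy with
  | zero => simpa using hx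
  | succ _ hu ih => simpa [← add_assoc] using ih.succ hu

theorem neg (hx : IsUnitSum n x) : IsUnitSum n (-x) := by
  induction hx with
  | zero => simpa using zero
  | succ _ hu ih => simpa [add_comm] using ih.succ hu.neg

theorem unit_mul {u : R} (hu : IsUnit u) (hx : IsUnitSum n x) : IsUnitSum n (u * x) := by
  induction hx with
  | zero => simpa using zero
  | succ _ hv ih => simpa [mul_add] using ih.succ (hu.mul hv)

theorem mul (hx : IsUnitSum m x) (hy : IsUnitSum n y) : IsUnitSum (m * n) (x * y) := by
  induction hx with
  | zero => simpa using zero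
  | succ _ hu ih => simpa [add_mul, Nat.succ_mul] using ih.add (hy.unit_mul hu)

theorem map (f : R →+* S) (hx : IsUnitSum n x) : IsUnitSum n (f x) := by
  induction hx with
  | zero => simpa using zero
  | succ _ hu ih => simpa using ih.succ (hu.map f)

theorem add_two (hx : IsUnitSum n x) : IsUnitSum (n + 2) x := by
  simpa using (hx.succ isUnit_one).succ isUnit_neg_one

theorem succ_of_two_one (h1 : IsUnitSum 2 (1 : R)) (hx : IsUnitSum (n + 1) x) :
    IsUnitSum (n + 2) x := by
  rcases hx with _ | ⟨hy, hu⟩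
  simpa using hy.add (h1.unit_mul hu)

theorem eventually (h1 : IsUnitSum 2 (1 : R)) (hx : IsUnitSum n x) :
    ∀ᶠ k in atTop, IsUnitSum k x := by
  refine eventually_atTop.2 ⟨n + 2, fun k hk => ?_⟩
  induction k, hk using Nat.le_induction with
  | base => exact hx.add_two
  | succ k hk ih =>
    obtain ⟨k, rfl⟩ : ∃ j, k = j + 1 := ⟨k - 1, by omega⟩
    exact h1.succ_of_two_one ih

theorem prodMk {a : R} {b : S} (ha : IsUnitSum n a) (hb : IsUnitSum n b) :
    IsUnitSum n (a, b) := by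
  induction n generalizing a b with
  | zero => simp_all [zero_iff]
  | succ n ih =>
    obtain ⟨a, u, ha', hu, rfl⟩ := succ_iff.1 ha
    obtain ⟨b, v, hb', hv, rfl⟩ := succ_iff.1 hb
    exact (ih ha' hb').succ (u := (u, v)) (Prod.isUnit_iff.2 ⟨hu, hv⟩)

theorem pi {ι : Type*} [Finite ι] {A : ι → Type*} [∀ i, Ring (A i)] {x : ∀ i, A i}
    (hx : ∀ i, IsUnitSum n (x i)) : IsUnitSum n x := by
  induction n generalizing x with
  | zero => simpa [zero_iff, funext_iff] using hx
  | succ n ih =>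
    choose y u hy hu hyu using fun i => succ_iff.1 (hx i)
    rw [← funext hyu]
    exact (ih hy).succ (Pi.isUnit_iff.2 hu)

theorem iff_natCast_eq [Subsingleton Rˣ] : IsUnitSum n x ↔ (n : R) = x := by
  constructor
  · intro hx
    induction hx with
    | zero => simp
    | succ _ hu ih => simp [ih, isUnit_iff_eq_one.1 hu]
  · rintro rfl
    induction n with
    | zero => simpa using zero
    | succ n ih => simpa using ih.succ isUnit_one

theorem exists_of_mem_closure (hx : x ∈ Subring.closure {u : R | IsUnit u}) :
    ∃ n, IsUnitSum n x := by
  induction hx using Subring.closure_induction with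
  | mem u hu => exact ⟨1, of_isUnit hu⟩
  | zero => exact ⟨0, zero⟩
  | one => exact ⟨1, of_isUnit isUnit_one⟩
  | add _ _ _ _ hx hy => exact hx.elim fun m hx => hy.elim fun n hy => ⟨m + n, hx.add hy⟩
  | neg _ _ hx => exact hx.elim fun n hx => ⟨n, hx.neg⟩
  | mul _ _ _ _ hx hy => exact hx.elim fun m hx => hy.elim fun n hy => ⟨m * n, hx.mul hy⟩

end IsUnitSum

section Graph

variable {R : Type*} [Ring R]

theorem unitaryCayleyGraph_adj {a b : R} :
    (unitaryCayleyGraph R).Adj a b ↔ a ≠ b ∧ IsUnit (a - b) := by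
  rw [unitaryCayleyGraph, SimpleGraph.fromRel_adj, IsUnit.sub_iff (x := b), or_self]

theorem unitaryCayleyGraph_reachable_add {a x : R} {n : ℕ} (hx : IsUnitSum n x) :
    (unitaryCayleyGraph R).Reachable a (a + x) := by
  induction hx with
  | zero => simp
  | @succ n x u _ hu ih =>
    refine ih.trans ?_
    by_cases h : a + x = a + (x + u)
    · rw [h] -- only in the zero ring, where the unit `u` is `0`
    · refine (unitaryCayleyGraph_adj.2 ⟨h, ?_⟩).reachable
      simpa [← sub_sub] using hu.neg

theorem unitaryCayleyGraph_reachable_iff {a b : R} :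
    (unitaryCayleyGraph R).Reachable a b ↔ ∃ n, IsUnitSum n (b - a) := by
  refine ⟨fun h => ?_, fun ⟨n, hn⟩ => by simpa using unitaryCayleyGraph_reachable_add (a := a) hn⟩
  replace h := (SimpleGraph.reachable_iff_reflTransGen _ _).1 h
  induction h with
  | refl => exact ⟨0, by simpa using IsUnitSum.zero⟩
  | tail _ hbc ih =>
    obtain ⟨n, hn⟩ := ih
    exact ⟨n + 1, by simpa using hn.succ (unitaryCayleyGraph_adj.1 hbc.symm).2⟩

theorem unitaryCayleyGraph_connected_iff :
    (unitaryCayleyGraph R).Connected ↔ ∀ x : R, ∃ n, IsUnitSum n x := by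
  rw [SimpleGraph.connected_iff, SimpleGraph.Preconnected, and_iff_left ⟨(0 : R)⟩]
  simp only [unitaryCayleyGraph_reachable_iff]
  exact ⟨fun h x => by simpa using h 0 x, fun h a b => h (b - a)⟩

end Graph

theorem natCast_eq_zero_iff_of_card_eq_two {R : Type*} [NonAssocRing R] [Fintype R]
    (hR : Fintype.card R = 2) {n : ℕ} : (n : R) = 0 ↔ 2 ∣ n :=
  have := charP_of_card_eq_prime hR
  CharP.cast_eq_zero_iff R 2 n

section FiniteField

variable {K : Type*} [Field K] [Fintype K]

theorem isUnitSum_iff_natCast_eq_of_card_eq_two (hK : Fintype.card K = 2) {n : ℕ} {x : K} :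
    IsUnitSum n x ↔ (n : K) = x := by
  classical
  have : Subsingleton Kˣ := by
    rw [← Fintype.card_le_one_iff_subsingleton, Fintype.card_units, hK]
  exact IsUnitSum.iff_natCast_eq

theorem frequently_isUnitSum_of_card_eq_two (hK : Fintype.card K = 2) (x : K) :
    ∃ᶠ n in atTop, IsUnitSum n x := by
  simp only [isUnitSum_iff_natCast_eq_of_card_eq_two hK]
  obtain ⟨m, rfl⟩ : ∃ m : ℕ, (m : K) = x := by
    rcases eq_or_ne x 0 with rfl | hx
    · exact ⟨0, Nat.cast_zero⟩
    · exact ⟨1, (isUnitSum_iff_natCast_eq_of_card_eq_two hK).1 (.of_isUnit hx.isUnit)⟩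
  have h2 : (2 : K) = 0 := by exact_mod_cast (natCast_eq_zero_iff_of_card_eq_two hK).2 dvd_rfl
  exact frequently_atTop.2 fun N => ⟨m + 2 * N, by omega, by push_cast; rw [h2, zero_mul, add_zero]⟩

theorem eventually_isUnitSum_of_card_ne_two (hK : Fintype.card K ≠ 2) (x : K) :
    ∀ᶠ n in atTop, IsUnitSum n x := by
  classical
  obtain ⟨a, -, ha⟩ :=
    Finset.exists_mem_notMem_of_card_lt_card (s := ({0, 1} : Finset K)) (t := .univ) <| by
      have := Fintype.one_lt_card (α := K)
      exact Finset.card_le_two.trans_lt (by rw [Finset.card_univ]; omega)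
  obtain ⟨ha₀, ha₁⟩ : a ≠ 0 ∧ a ≠ 1 := by simpa [not_or] using ha
  have h1 : IsUnitSum 2 (1 : K) := by
    simpa using (IsUnitSum.of_isUnit ha₀.isUnit).add
      (IsUnitSum.of_isUnit (sub_ne_zero.2 ha₁.symm).isUnit)
  rcases eq_or_ne x 0 with rfl | hx
  · exact h1.eventually IsUnitSum.zero
  · exact h1.eventually (IsUnitSum.of_isUnit hx.isUnit)

theorem not_isUnitSum_one_zero {L : Type*} [Field L] [Fintype L] (hK : Fintype.card K = 2)
    (hL : Fintype.card L = 2) {n : ℕ} : ¬IsUnitSum n ((1, 0) : K × L) := by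
  intro h
  have h₁ := (isUnitSum_iff_natCast_eq_of_card_eq_two hK).1 (h.map (RingHom.fst K L))
  have h₂ := (isUnitSum_iff_natCast_eq_of_card_eq_two hL).1 (h.map (RingHom.snd K L))
  rw [(natCast_eq_zero_iff_of_card_eq_two hK).2 ((natCast_eq_zero_iff_of_card_eq_two hL).1 h₂)]
    at h₁
  exact zero_ne_one h₁

theorem frequently_isUnitSum_pi {ι : Type*} [Finite ι] {K : ι → Type*} [∀ i, Field (K i)]
    [∀ i, Fintype (K i)] (hK : ∀ i j, Fintype.card (K i) = 2 → Fintype.card (K j) = 2 → i = j)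
    (x : ∀ i, K i) : ∃ᶠ n in atTop, IsUnitSum n x := by
  have large : ∀ᶠ n in atTop, ∀ i, Fintype.card (K i) ≠ 2 → IsUnitSum n (x i) :=
    eventually_all.2 fun i => by
      by_cases hi : Fintype.card (K i) = 2
      · exact .of_forall fun _ h => (h hi).elim
      · exact (eventually_isUnitSum_of_card_ne_two hi _).mono fun _ hn _ => hn
  have parity : ∃ᶠ n in atTop, ∀ i, Fintype.card (K i) = 2 → IsUnitSum n (x i) := by
    by_cases h2 : ∃ i, Fintype.card (K i) = 2
    · obtain ⟨i₀, hi₀⟩ := h2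
      refine (frequently_isUnitSum_of_card_eq_two hi₀ (x i₀)).mono fun n hn i hi => ?_
      obtain rfl := hK i i₀ hi hi₀
      exact hn
    · push Not at h2
      exact .of_forall fun _ i hi => (h2 i hi).elim
  refine (parity.and_eventually large).mono fun n hn => IsUnitSum.pi fun i => ?_
  by_cases hi : Fintype.card (K i) = 2
  exacts [hn.1 i hi, hn.2 i hi]

end FiniteField

namespace Matrix

variable {α : Type*} [CommRing α]

theorem mem_closure_isUnit {n : Type*} [Fintype n] [DecidableEq n] [Nontrivial n]
    (A : Matrix n n α) : A ∈ Subring.closure {u : Matrix n n α | IsUnit u} := by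
  set S := Subring.closure {u : Matrix n n α | IsUnit u}
  have off_diag : ∀ i j, i ≠ j → ∀ c, single i j c ∈ S := fun i j hij c => by
    have hT : IsUnit (transvection i j c) := by
      rw [isUnit_iff_isUnit_det, det_transvection_of_ne i j hij]
      exact isUnit_one
    simpa [transvection] using S.sub_mem (Subring.subset_closure hT) S.one_mem
  have all : ∀ i j c, single i j c ∈ S := fun i j c => by
    obtain ⟨k, hk⟩ := exists_ne i
    rcases eq_or_ne i j with rfl | hij
    · simpa using mul_mem (off_diag i k hk.symm c) (off_diag k i hk 1)
    · exact off_diag i j hij c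
  rw [matrix_eq_sum_single A]
  exact sum_mem fun i _ => sum_mem fun j _ => all i j (A i j)

theorem _root_.IsUnitSum.fromBlocks {l m : Type*} [Fintype l] [Fintype m] [DecidableEq l]
    [DecidableEq m] {k : ℕ} {A : Matrix l l α} {B : Matrix m m α} (hA : IsUnitSum k A)
    (hB : IsUnitSum k B) : IsUnitSum k (Matrix.fromBlocks A 0 0 B) := by
  induction k generalizing A B with
  | zero => simp_all [IsUnitSum.zero_iff]
  | succ k ih =>
    obtain ⟨A, U, hA', hU, rfl⟩ := IsUnitSum.succ_iff.1 hA
    obtain ⟨B, V, hB', hV, rfl⟩ := IsUnitSum.succ_iff.1 hB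
    have hUV : IsUnit (Matrix.fromBlocks U 0 0 V) := by
      rw [isUnit_iff_isUnit_det, det_fromBlocks_zero₂₁]
      exact ((isUnit_iff_isUnit_det U).1 hU).mul ((isUnit_iff_isUnit_det V).1 hV)
    simpa [fromBlocks_add] using (ih hA' hB').succ hUV

theorem isUnitSum_two_one_fin_two : IsUnitSum 2 (1 : Matrix (Fin 2) (Fin 2) α) := by
  have h : (1 : Matrix (Fin 2) (Fin 2) α) = !![1, 1; 1, 0] + !![0, -1; -1, 1] := by
    ext i j; fin_cases i <;> fin_cases j <;> simp
  rw [h]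
  refine (IsUnitSum.of_isUnit ?_).add (IsUnitSum.of_isUnit ?_) <;>
    simp [isUnit_iff_isUnit_det, det_fin_two]

theorem isUnitSum_two_one_fin_three : IsUnitSum 2 (1 : Matrix (Fin 3) (Fin 3) α) := by
  have h : (1 : Matrix (Fin 3) (Fin 3) α) =
      !![1, 0, 1; 1, 1, 1; 0, 1, 1] + !![0, 0, -1; -1, 0, -1; 0, -1, 0] := by
    ext i j; fin_cases i <;> fin_cases j <;> simp
  rw [h]
  refine (IsUnitSum.of_isUnit ?_).add (IsUnitSum.of_isUnit ?_) <;>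
    simp [isUnit_iff_isUnit_det, det_fin_three]

theorem isUnitSum_two_one {m : ℕ} (hm : 2 ≤ m) : IsUnitSum 2 (1 : Matrix (Fin m) (Fin m) α) := by
  induction m using Nat.strong_induction_on with
  | _ m ih =>
    rcases (show m = 2 ∨ m = 3 ∨ 4 ≤ m by omega) with rfl | rfl | hm
    · exact isUnitSum_two_one_fin_two
    · exact isUnitSum_two_one_fin_three
    · obtain ⟨k, rfl⟩ : ∃ k, m = 2 + k := ⟨m - 2, by omega⟩
      simpa using (isUnitSum_two_one_fin_two.fromBlocks (ih k (by omega) (by omega))).map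
        (reindexAlgEquiv α α finSumFinEquiv).toRingHom

theorem eventually_isUnitSum {m : ℕ} (hm : 2 ≤ m) (A : Matrix (Fin m) (Fin m) α) :
    ∀ᶠ n in atTop, IsUnitSum n A := by
  have := Fin.nontrivial_iff_two_le.2 hm
  obtain ⟨n, hA⟩ := IsUnitSum.exists_of_mem_closure (mem_closure_isUnit A)
  exact (isUnitSum_two_one hm).eventually hA

end Matrix

theorem stmt7_general (s r : ℕ)
    (K : Fin s → Type*) [∀ i, Field (K i)] [∀ i, Fintype (K i)]
    (F : Fin r → Type*) [∀ j, Field (F j)]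
    (d : Fin r → ℕ) (hd : ∀ j, 2 ≤ d j) :
    (unitaryCayleyGraph
        ((∀ i, K i) × ∀ j, Matrix (Fin (d j)) (Fin (d j)) (F j))).Connected ↔
      ∀ i₁ i₂ : Fin s, Fintype.card (K i₁) = 2 → Fintype.card (K i₂) = 2 → i₁ = i₂ := by
  rw [unitaryCayleyGraph_connected_iff]
  refine ⟨fun h i₁ i₂ h₁ h₂ => ?_, fun h x => ?_⟩
  · by_contra hne
    obtain ⟨n, hn⟩ := h (Pi.single i₁ 1, 0)
    refine not_isUnitSum_one_zero h₁ h₂ (n := n) ?_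
    simpa [Ne.symm hne] using
      hn.map (((Pi.evalRingHom K i₁).prod (Pi.evalRingHom K i₂)).comp (RingHom.fst _ _))
  · obtain ⟨n, hK, hM⟩ := ((frequently_isUnitSum_pi h x.1).and_eventually
      (eventually_all.2 fun j => Matrix.eventually_isUnitSum (hd j) (x.2 j))).exists
    exact ⟨n, hK.prodMk (IsUnitSum.pi hM)⟩

theorem stmt7 (s r : ℕ) (hsr : 1 ≤ s + r)
    (K : Fin s → Type*) [∀ i, Field (K i)] [∀ i, Fintype (K i)]
    (F : Fin r → Type*) [∀ j, Field (F j)] [∀ j, Fintype (F j)]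
    (d : Fin r → ℕ) (hd : ∀ j, 2 ≤ d j) :
    (unitaryCayleyGraph
        ((∀ i, K i) × ∀ j, Matrix (Fin (d j)) (Fin (d j)) (F j))).Connected ↔
      ∀ i₁ i₂ : Fin s, Fintype.card (K i₁) = 2 → Fintype.card (K i₂) = 2 → i₁ = i₂ :=
  stmt7_general s r K F d hd
end

section
/- Let s, r ≥ 0 with s + r ≥ 1, let K_1, …, K_s and F_1, …, F_r be finite fields, let d_1, …, d_r be integers with each d_j ≥ 2, and let R = K_1 × ⋯ × K_s × M_{d_1}(F_1) × ⋯ × M_{d_r}(F_r). Then the complement of the unitary Cayley graph G_R is connected if and only if R is not a field, i.e., if and only if it is not the case that s = 1 and r = 0. -/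
/-!
In the complement of `G_R`, `x` and `x + p` are equal or adjacent whenever `p` is a nonunit,
so if every element is a sum of two nonunits, any `x` reaches any `y` in two steps. When `R`
is not a field such decompositions exist: for `s ≥ 2` split an element across two field
factors, for `r ≥ 1` split a matrix component across two rows; each summand then has a zero
coordinate or a zero row. In a field every difference of distinct elements is a unit, so the
complement has no edges.
-/

section Ring

variable {R : Type*} [Ring R]

theorem unitaryCayleyGraph_compl_adj {a b : R} :
    (unitaryCayleyGraph R)ᶜ.Adj a b ↔ a ≠ b ∧ ¬ IsUnit (a - b) := by
  rw [SimpleGraph.compl_adj, unitaryCayleyGraph, SimpleGraph.fromRel_adj]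
  have : IsUnit (b - a) ↔ IsUnit (a - b) := by rw [← neg_sub, IsUnit.neg_iff]
  rw [this, or_self]
  tauto

theorem unitaryCayleyGraph_compl_reachable_add (x : R) {p : R} (hp : ¬ IsUnit p) :
    (unitaryCayleyGraph R)ᶜ.Reachable x (x + p) := by
  rcases eq_or_ne p 0 with rfl | hp0
  · rw [add_zero]
  · refine SimpleGraph.Adj.reachable (unitaryCayleyGraph_compl_adj.2 ⟨?_, ?_⟩)
    · simpa using hp0
    · rwa [sub_add_cancel_left, IsUnit.neg_iff]

def IsSumOfTwoNonunits (z : R) : Prop :=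
  ∃ p q : R, ¬ IsUnit p ∧ ¬ IsUnit q ∧ p + q = z

theorem unitaryCayleyGraph_compl_connected (h : ∀ z : R, IsSumOfTwoNonunits z) :
    (unitaryCayleyGraph R)ᶜ.Connected := by
  refine (SimpleGraph.connected_iff _).2 ⟨fun x y => ?_, ⟨0⟩⟩
  obtain ⟨p, q, hp, hq, hpq⟩ := h (y - x)
  have hy : x + p + q = y := by rw [add_assoc, hpq, add_sub_cancel]
  exact hy ▸ (unitaryCayleyGraph_compl_reachable_add x hp).trans
    (unitaryCayleyGraph_compl_reachable_add (x + p) hq)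

theorem unitaryCayleyGraph_compl_eq_bot_of_isField (h : IsField R) :
    (unitaryCayleyGraph R)ᶜ = ⊥ := by
  ext a b
  simp only [unitaryCayleyGraph_compl_adj, SimpleGraph.bot_adj, iff_false, not_and, not_not]
  intro hab
  obtain ⟨c, hc⟩ := h.mul_inv_cancel (sub_ne_zero.2 hab)
  exact isUnit_iff_exists.2 ⟨c, hc, h.mul_comm c _ ▸ hc⟩

theorem not_connected_unitaryCayleyGraph_compl_of_isField (h : IsField R) :
    ¬ (unitaryCayleyGraph R)ᶜ.Connected := by
  have := h.nontrivial
  rw [unitaryCayleyGraph_compl_eq_bot_of_isField h]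
  exact SimpleGraph.not_connected_bot

end Ring

section Prod

variable {S T : Type*} [Ring S] [Ring T]

theorem IsSumOfTwoNonunits.prod_mk_left {x : S} (hx : IsSumOfTwoNonunits x) (y : T) :
    IsSumOfTwoNonunits (x, y) := by
  obtain ⟨p, q, hp, hq, rfl⟩ := hx
  exact ⟨(p, y), (q, 0), fun hu => hp (Prod.isUnit_iff.1 hu).1,
    fun hu => hq (Prod.isUnit_iff.1 hu).1, by simp⟩

theorem IsSumOfTwoNonunits.prod_mk_right (x : S) {y : T} (hy : IsSumOfTwoNonunits y) :
    IsSumOfTwoNonunits (x, y) := by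
  obtain ⟨p, q, hp, hq, rfl⟩ := hy
  exact ⟨(x, p), (0, q), fun hu => hp (Prod.isUnit_iff.1 hu).2,
    fun hu => hq (Prod.isUnit_iff.1 hu).2, by simp⟩

end Prod

section Pi

variable {ι : Type*} [DecidableEq ι] {R : ι → Type*} [∀ i, Ring (R i)]

theorem Pi.isSumOfTwoNonunits_of_apply (z : ∀ i, R i) (i : ι)
    (hz : IsSumOfTwoNonunits (z i)) : IsSumOfTwoNonunits z := by
  obtain ⟨p, q, hp, hq, hpq⟩ := hz
  refine ⟨Function.update z i p, Pi.single i q, ?_, ?_, ?_⟩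
  · exact fun hu => hp (by simpa using hu.apply i)
  · exact fun hu => hq (by simpa using hu.apply i)
  · ext k
    rcases eq_or_ne k i with rfl | hk
    · simpa using hpq
    · simp [hk]

theorem Pi.isSumOfTwoNonunits [∀ i, Nontrivial (R i)] {i j : ι} (hij : i ≠ j)
    (z : ∀ i, R i) : IsSumOfTwoNonunits z := by
  refine ⟨Function.update z i 0, Pi.single i (z i), ?_, ?_, ?_⟩
  · exact fun hu => not_isUnit_zero (M₀ := R i) (by simpa using hu.apply i)
  · exact fun hu => not_isUnit_zero (M₀ := R j) (by simpa [hij.symm] using hu.apply j)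
  · ext k
    rcases eq_or_ne k i with rfl | hk
    · simp
    · simp [hk]

end Pi

section Matrix

variable {n F : Type*} [Fintype n] [DecidableEq n] [CommRing F] [Nontrivial F]

theorem Matrix.not_isUnit_of_row_eq_zero {M : Matrix n n F} (i : n) (h : ∀ j, M i j = 0) :
    ¬ IsUnit M := by
  rw [Matrix.isUnit_iff_isUnit_det, Matrix.det_eq_zero_of_row_eq_zero i h]
  exact not_isUnit_zero

theorem Matrix.isSumOfTwoNonunits {a b : n} (hab : a ≠ b) (M : Matrix n n F) :
    IsSumOfTwoNonunits M := by
  refine ⟨M.updateRow a 0, (0 : Matrix n n F).updateRow a (M a), ?_, ?_, ?_⟩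
  · exact Matrix.not_isUnit_of_row_eq_zero a (by simp)
  · exact Matrix.not_isUnit_of_row_eq_zero b (by simp [Matrix.updateRow_apply, hab.symm])
  · ext i j
    rcases eq_or_ne i a with rfl | hi
    · simp
    · simp [Matrix.updateRow_apply, hi]

end Matrix

theorem stmt8_general (s r : ℕ) (hsr : 1 ≤ s + r)
    (K : Fin s → Type*) [∀ i, Field (K i)]
    (F : Fin r → Type*) [∀ j, Field (F j)]
    (d : Fin r → ℕ) (hd : ∀ j, 2 ≤ d j) :
    (unitaryCayleyGraph
        ((∀ i, K i) × ∀ j, Matrix (Fin (d j)) (Fin (d j)) (F j)))ᶜ.Connected ↔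
      ¬ (s = 1 ∧ r = 0) := by
  constructor
  · rintro hconn ⟨rfl, rfl⟩
    refine not_connected_unitaryCayleyGraph_compl_of_isField ?_ hconn
    exact MulEquiv.isField (Field.toIsField (K 0))
      ((RingEquiv.prodZeroRing _ _).symm.trans (RingEquiv.piUnique K)).toMulEquiv
  · intro hnot_field
    refine unitaryCayleyGraph_compl_connected fun z => ?_
    obtain ⟨x, y⟩ := z
    rcases Nat.eq_zero_or_pos r with rfl | hr
    · have hs : 1 < s := by omega
      exact .prod_mk_left (Pi.isSumOfTwoNonunits (i := ⟨0, by omega⟩) (j := ⟨1, hs⟩)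
        (by simp [Fin.ext_iff]) x) y
    · let j : Fin r := ⟨0, hr⟩
      have hdj : 1 < d j := hd j
      exact .prod_mk_right x <| Pi.isSumOfTwoNonunits_of_apply y j <|
        Matrix.isSumOfTwoNonunits (a := ⟨0, by omega⟩) (b := ⟨1, hdj⟩)
          (by simp [Fin.ext_iff]) (y j)

theorem stmt8 (s r : ℕ) (hsr : 1 ≤ s + r)
    (K : Fin s → Type*) [∀ i, Field (K i)] [∀ i, Fintype (K i)]
    (F : Fin r → Type*) [∀ j, Field (F j)] [∀ j, Fintype (F j)]
    (d : Fin r → ℕ) (hd : ∀ j, 2 ≤ d j) :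
    (unitaryCayleyGraph
        ((∀ i, K i) × ∀ j, Matrix (Fin (d j)) (Fin (d j)) (F j)))ᶜ.Connected ↔
      ¬ (s = 1 ∧ r = 0) :=
  stmt8_general s r hsr K F d hd
end

section
/- Let R be a finite ring and U a subgroup of R^× with -1 ∈ U. Suppose the Cayley graph Γ(R,U) and its complement graph are both connected, and that Γ(R,U) is not prime. Then 0 is an eigenvalue of the adjacency matrix of Γ(R,U); equivalently, the adjacency matrix of Γ(R,U) over ℂ has determinant 0. -/
section Aux

variable {R : Type*} [Ring R]

/-- Surjective images under graph automorphisms preserve homogeneous sets. -/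
private lemma homog_image {α : Type*} {G : SimpleGraph α} (e : α → α)
    (hsurj : Function.Surjective e)
    (he : ∀ a b, G.Adj (e a) (e b) ↔ G.Adj a b)
    {X : Set α} (hX : IsHomogeneousSet G X) : IsHomogeneousSet G (e '' X) := by
  intro v hv
  obtain ⟨v', rfl⟩ := hsurj v
  have hv' : v' ∉ X := fun h => hv ⟨v', h, rfl⟩
  rcases hX v' hv' with h | h
  · left; rintro x ⟨x', hx', rfl⟩; exact (he _ _).2 (h x' hx')
  · right; rintro x ⟨x', hx', rfl⟩ hadj; exact h x' hx' ((he _ _).1 hadj)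

private lemma homog_inter {α : Type*} {G : SimpleGraph α} {X Y : Set α}
    (hX : IsHomogeneousSet G X) (hY : IsHomogeneousSet G Y) :
    IsHomogeneousSet G (X ∩ Y) := by
  intro v hv
  by_cases hvX : v ∈ X
  · have hvY : v ∉ Y := fun h => hv ⟨hvX, h⟩
    rcases hY v hvY with h | h
    · left; exact fun x hx => h x hx.2
    · right; exact fun x hx => h x hx.2
  · rcases hX v hvX with h | h
    · left; exact fun x hx => h x hx.1
    · right; exact fun x hx => h x hx.1

/-- If adding `e` maps a finite set into itself, then it permutes it. -/
private lemma image_add_iff [Fintype R] {A : Set R} (e : R) (h : ∀ a ∈ A, a + e ∈ A) :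
    ∀ a : R, a + e ∈ A ↔ a ∈ A := by
  have himg : (fun a => a + e) '' A = A := by
    apply Set.eq_of_subset_of_ncard_le
    · rintro x ⟨a, ha, rfl⟩; exact h a ha
    · rw [Set.ncard_image_of_injective _ (add_left_injective e)]
    · exact A.toFinite
  intro a
  constructor
  · intro ha
    have : a + e ∈ (fun a => a + e) '' A := himg.symm ▸ ha
    obtain ⟨b, hb, hbe⟩ := this
    have hba : b = a := add_left_injective e hbe
    rwa [← hba]
  · exact h a

private lemma walk_closed {α : Type*} {G : SimpleGraph α} {S : Set α}
    (hS : ∀ a ∈ S, ∀ b, G.Adj a b → b ∈ S) :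
    ∀ {a b : α}, G.Walk a b → a ∈ S → b ∈ S := by
  intro a b w
  induction w with
  | nil => exact id
  | cons h p ih => exact fun ha => ih (hS _ ha _ h)

/-- Two homogeneous sets through `0` meeting only at `0` cannot carry a unit and a
nonzero non-unit respectively. -/
private lemma disjoint_homog_contra (Vs : Set R) (G : SimpleGraph R)
    (adj : ∀ a b, G.Adj a b ↔ a ≠ b ∧ a - b ∈ Vs)
    (h0V : (0 : R) ∉ Vs) (hneg : ∀ a ∈ Vs, -a ∈ Vs)
    {Y Z : Set R} (hY : IsHomogeneousSet G Y) (hZ : IsHomogeneousSet G Z)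
    (h0Y : (0 : R) ∈ Y) (h0Z : (0 : R) ∈ Z)
    (hYZ : ∀ a, a ∈ Y → a ∈ Z → a = 0)
    {u' t' : R} (hu'Y : u' ∈ Y) (hu'V : u' ∈ Vs)
    (ht'Z : t' ∈ Z) (ht'0 : t' ≠ 0) (ht'V : t' ∉ Vs) : False := by
  have hu'0 : u' ≠ 0 := fun h => h0V (h ▸ hu'V)
  have hne : t' ≠ u' := fun h => hu'0 (hYZ u' hu'Y (h ▸ ht'Z))
  have hu'Z : u' ∉ Z := fun h => hu'0 (hYZ u' hu'Y h)
  have ht'Y : t' ∉ Y := fun h => ht'0 (hYZ t' h ht'Z)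
  have hadj0 : G.Adj u' 0 := by
    rw [adj]; exact ⟨hu'0, by rwa [sub_zero]⟩
  -- u' is adjacent to all of Z
  have hall : u' - t' ∈ Vs := by
    rcases hZ u' hu'Z with h | h
    · have := h t' ht'Z; rw [adj] at this; exact this.2
    · exact absurd hadj0 (h 0 h0Z)
  -- t' is adjacent to none of Y
  have hnone : ¬ G.Adj t' 0 := by
    rw [adj]; rintro ⟨-, h⟩; rw [sub_zero] at h; exact ht'V h
  rcases hY t' ht'Y with h | h
  · exact hnone (h 0 h0Y)
  · have := h u' hu'Y
    rw [adj] at this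
    push_neg at this
    have h2 := this hne
    exact h2 (by simpa [neg_sub] using hneg _ hall)

theorem key_units_stab [Fintype R] [DecidableEq R]
    (U : Subgroup Rˣ) (hU : -1 ∈ U)
    (hconn : (cayleyGraph (unitsSet R U)).Connected)
    (hanti : (cayleyGraph (unitsSet R U))ᶜ.Connected)
    (hnotprime : ¬ IsPrimeGraph (cayleyGraph (unitsSet R U))) :
    ∃ d : R, d ≠ 0 ∧ ∀ a : R, a + d ∈ unitsSet R U ↔ a ∈ unitsSet R U := by
  classical
  set Vs : Set R := unitsSet R U with hVsdef
  set G : SimpleGraph R := cayleyGraph Vs with hGdef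
  obtain ⟨X₀, hX₀hom, hX₀2, hX₀lt⟩ := not_not.mp hnotprime
  have hcard : 2 < Fintype.card R := lt_of_le_of_lt hX₀2 hX₀lt
  have : Nontrivial R := Fintype.one_lt_card_iff_nontrivial.mp (by omega)
  -- basic facts about Vs
  have hmemV : ∀ a : R, a ∈ Vs ↔ ∃ w : Rˣ, w ∈ U ∧ (w : R) = a := by
    intro a
    constructor
    · rintro ⟨w, hw, rfl⟩; exact ⟨w, hw, rfl⟩
    · rintro ⟨w, hw, rfl⟩; exact ⟨w, hw, rfl⟩
  have h0V : (0 : R) ∉ Vs := by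
    rintro ⟨w, hw, hval⟩
    have hval' : (w : R) = 0 := hval
    have h1 : (w : R) * ((w⁻¹ : Rˣ) : R) = 1 := by
      rw [← Units.val_mul, mul_inv_cancel, Units.val_one]
    rw [hval'] at h1
    simp at h1
  have hVneg : ∀ a ∈ Vs, -a ∈ Vs := by
    rintro a ⟨w, hw, rfl⟩
    refine (hmemV _).2 ⟨-1 * w, mul_mem hU hw, ?_⟩
    rw [Units.val_mul, Units.val_neg, Units.val_one, neg_one_mul]
  have hVmulU : ∀ (w : Rˣ), w ∈ U → ∀ a ∈ Vs, (w : R) * a ∈ Vs := by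
    rintro w hw a ⟨w', hw', rfl⟩
    exact (hmemV _).2 ⟨w * w', mul_mem hw hw', by rw [Units.val_mul]⟩
  have hVmulU' : ∀ (w : Rˣ), w ∈ U → ∀ a ∈ Vs, a * (w : R) ∈ Vs := by
    rintro w hw a ⟨w', hw', rfl⟩
    exact (hmemV _).2 ⟨w' * w, mul_mem hw' hw, by rw [Units.val_mul]⟩
  have hV1 : (1 : R) ∈ Vs := (hmemV _).2 ⟨1, one_mem U, Units.val_one⟩
  -- adjacency
  have adj : ∀ a b : R, G.Adj a b ↔ a ≠ b ∧ a - b ∈ Vs := by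
    intro a b
    rw [hGdef]
    show (SimpleGraph.fromRel _).Adj a b ↔ _
    rw [SimpleGraph.fromRel_adj]
    constructor
    · rintro ⟨h1, h2 | h2⟩
      · exact ⟨h1, h2⟩
      · exact ⟨h1, by have := hVneg _ h2; rwa [neg_sub] at this⟩
    · rintro ⟨h1, h2⟩; exact ⟨h1, Or.inl h2⟩

  -- graph automorphisms: translations
  have adj_add : ∀ (c a b : R), G.Adj (a + c) (b + c) ↔ G.Adj a b := by
    intro c a b
    rw [adj, adj, show a + c - (b + c) = a - b by abel]
    constructor
    · rintro ⟨h1, h2⟩; exact ⟨fun h => h1 (by rw [h]), h2⟩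
    · rintro ⟨h1, h2⟩; exact ⟨fun h => h1 (add_right_cancel h), h2⟩
  -- graph automorphisms: multiplication by units of U
  have adj_mul : ∀ (w : Rˣ), w ∈ U → ∀ a b : R,
      G.Adj ((w : R) * a) ((w : R) * b) ↔ G.Adj a b := by
    intro w hw a b
    rw [adj, adj]
    have h2 : (w : R) * a - (w : R) * b = (w : R) * (a - b) := (mul_sub _ _ _).symm
    constructor
    · rintro ⟨hne, hmem⟩
      refine ⟨fun h => hne (by rw [h]), ?_⟩
      rw [h2] at hmem
      have := hVmulU w⁻¹ (inv_mem hw) _ hmem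
      rwa [← mul_assoc, ← Units.val_mul, inv_mul_cancel, Units.val_one, one_mul] at this
    · rintro ⟨hne, hmem⟩
      exact ⟨fun h => hne ((Units.mul_right_inj w).1 h), by rw [h2]; exact hVmulU w hw _ hmem⟩
  -- minimal nontrivial homogeneous sets through 0
  set P : ℕ → Prop := fun n => ∃ X : Set R, IsHomogeneousSet G X ∧ (0:R) ∈ X ∧
      X.ncard = n ∧ 2 ≤ n ∧ n < Fintype.card R with hPdef
  have hPne : ∃ n, P n := by
    obtain ⟨x₀, hx₀⟩ : X₀.Nonempty := Set.nonempty_of_ncard_ne_zero (by omega)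
    refine ⟨X₀.ncard, (fun a => a + (-x₀)) '' X₀,
      homog_image _ (fun b => ⟨b - (-x₀), by abel⟩) (adj_add _) hX₀hom,
      ⟨x₀, hx₀, by abel⟩, ?_, hX₀2, hX₀lt⟩
    rw [Set.ncard_image_of_injective _ (add_left_injective _)]
  set s := sInf {n | P n} with hsdef
  have hs : P s := Nat.sInf_mem hPne
  have hmin : ∀ m, P m → s ≤ m := fun m hm => Nat.sInf_le hm
  obtain ⟨X, hXhom, h0X, hXcard, hs2, hslt⟩ := hs
  have hX1lt : 1 < X.ncard := by omega
  obtain ⟨x, hxX, hx0⟩ := Set.exists_ne_of_one_lt_ncard hX1lt 0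
  by_cases hA : ∀ y ∈ X, y ∉ Vs
  -- CASE A : X is independent at 0 : conclusion holds with d = -x
  · refine ⟨-x, neg_ne_zero.mpr hx0, ?_⟩
    apply image_add_iff
    intro u hu
    set X' := (fun a => a + (-x)) '' X with hX'def
    have hX'hom : IsHomogeneousSet G X' :=
      homog_image _ (fun b => ⟨b - (-x), by abel⟩) (adj_add _) hXhom
    have h0X' : (0 : R) ∈ X' := ⟨x, hxX, by abel⟩
    have hzX' : -x ∈ X' := ⟨0, h0X, by abel⟩
    have hiso : ∀ y ∈ X', ¬ G.Adj (-x) y := by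
      rintro y ⟨y', hy', rfl⟩ hadj
      rw [adj] at hadj
      have h2 : -y' ∈ Vs := by
        have := hadj.2
        rwa [show -x - (y' + -x) = -y' by abel] at this
      exact hA y' hy' (by simpa using hVneg _ h2)
    have hu0 : u ≠ 0 := fun h => h0V (h ▸ hu)
    have hvadj : G.Adj (u + -x) (-x) := by
      rw [adj]
      constructor
      · intro h
        apply hu0
        have h3 : u + -x - -x = -x - -x := by rw [h]
        simpa using h3
      · rwa [show u + -x - -x = u by abel]
    have hvX' : u + -x ∉ X' := fun hv => hiso _ hv hvadj.symm
    rcases hX'hom _ hvX' with hall | hnone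
    · have h4 := hall 0 h0X'
      rw [adj] at h4
      have h5 := h4.2
      rwa [sub_zero] at h5
    · exact absurd hvadj (hnone _ hzX')
  · push_neg at hA
    obtain ⟨u₀, hu₀X, hu₀V⟩ := hA
    exfalso
    by_cases hB : ∀ y ∈ X, y ≠ 0 → y ∈ Vs
    -- CASE B : X ∖ {0} consists of units : contradiction with connectivity
    · set S : Set R := insert 0 Vs with hSdef
      have hx₁V : x ∈ Vs := hB x hxX hx0
      have step1 : ∀ a ∈ S, a + x ∈ S := by
        rintro a ha
        rcases Set.mem_insert_iff.1 ha with rfl | haV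
        · rw [zero_add]; exact Set.mem_insert_of_mem _ hx₁V
        · by_cases hvX : a + x ∈ X
          · by_cases hv0 : a + x = 0
            · rw [hv0]; exact Set.mem_insert _ _
            · exact Set.mem_insert_of_mem _ (hB _ hvX hv0)
          · have hadjx : G.Adj (a + x) x := by
              rw [adj]
              constructor
              · intro h
                have ha0 : a = 0 := by
                  have := congrArg (fun z => z + (-x)) h
                  simpa using this
                exact h0V (ha0 ▸ haV)
              · rwa [show a + x - x = a by abel]
            rcases hXhom _ hvX with hall | hnone
            · have h4 := hall 0 h0X
              rw [adj] at h4
              have h5 := h4.2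
              rw [sub_zero] at h5
              exact Set.mem_insert_of_mem _ h5
            · exact absurd hadjx (hnone _ hxX)
      have hQx : ∀ a : R, a + x ∈ S ↔ a ∈ S := image_add_iff x step1
      have hSmul : ∀ (w : Rˣ), w ∈ U → ∀ c ∈ S, c * (w:R) ∈ S := by
        rintro w hw c hc
        rcases Set.mem_insert_iff.1 hc with rfl | hcV
        · rw [zero_mul]; exact Set.mem_insert _ _
        · exact Set.mem_insert_of_mem _ (hVmulU' w hw _ hcV)
      have hSmul_iff : ∀ (w : Rˣ), w ∈ U → ∀ c : R, c * (w:R) ∈ S ↔ c ∈ S := by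
        intro w hw c
        constructor
        · intro h
          have := hSmul w⁻¹ (inv_mem hw) _ h
          rwa [mul_assoc, ← Units.val_mul, mul_inv_cancel, Units.val_one, mul_one] at this
        · exact hSmul w hw c
      have hQmul : ∀ d : R, (∀ a : R, a + d ∈ S ↔ a ∈ S) → ∀ (w : Rˣ), w ∈ U →
          ∀ a : R, a + d * (w:R) ∈ S ↔ a ∈ S := by
        intro d hQ w hw a
        have hb : a = a * ((w⁻¹ : Rˣ):R) * (w:R) := by
          rw [mul_assoc, ← Units.val_mul, inv_mul_cancel, Units.val_one, mul_one]
        set b := a * ((w⁻¹ : Rˣ):R) with hbdef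
        calc a + d * (w:R) ∈ S ↔ (b + d) * (w:R) ∈ S := by rw [add_mul, ← hb]
          _ ↔ b + d ∈ S := hSmul_iff w hw _
          _ ↔ b ∈ S := hQ b
          _ ↔ b * (w:R) ∈ S := (hSmul_iff w hw b).symm
          _ ↔ a ∈ S := by rw [← hb]
      have hQ1 : ∀ a : R, a + 1 ∈ S ↔ a ∈ S := by
        obtain ⟨w₁, hw₁U, hw₁⟩ := (hmemV x).1 hx₁V
        have h6 := hQmul x hQx w₁⁻¹ (inv_mem hw₁U)
        have hx1 : x * ((w₁⁻¹ : Rˣ):R) = 1 := by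
          rw [← hw₁, ← Units.val_mul, mul_inv_cancel, Units.val_one]
        rwa [hx1] at h6
      have hSaddV : ∀ a ∈ S, ∀ u ∈ Vs, a + u ∈ S := by
        intro a ha u huV
        obtain ⟨w, hwU, hwv⟩ := (hmemV u).1 huV
        have hb : a = a * ((w⁻¹:Rˣ):R) * (w:R) := by
          rw [mul_assoc, ← Units.val_mul, inv_mul_cancel, Units.val_one, mul_one]
        have hbS : a * ((w⁻¹:Rˣ):R) ∈ S := (hSmul_iff w hwU _).1 (by rw [← hb]; exact ha)
        have h7 : a * ((w⁻¹:Rˣ):R) + 1 ∈ S := (hQ1 _).2 hbS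
        have h8 := hSmul w hwU _ h7
        rwa [add_mul, one_mul, ← hb, hwv] at h8
      have hSuniv : ∀ v : R, v ∈ S := by
        intro v
        obtain ⟨w⟩ := hconn.preconnected 0 v
        refine walk_closed ?_ w (Set.mem_insert _ _)
        intro a ha b hab
        rw [adj] at hab
        have h9 := hSaddV a ha (b - a) (by rw [← neg_sub]; exact hVneg _ hab.2)
        rwa [show a + (b - a) = b by abel] at h9
      obtain ⟨v, hv⟩ := exists_ne (0 : R)
      obtain ⟨w⟩ := hanti.preconnected v 0
      cases w with
      | nil => exact hv rfl
      | @cons _ c _ h p =>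
        rw [SimpleGraph.compl_adj] at h
        apply h.2
        rw [adj]
        refine ⟨h.1, ?_⟩
        rcases Set.mem_insert_iff.1 (hSuniv (v - c)) with h0 | hVv
        · exact absurd (sub_eq_zero.1 h0) h.1
        · exact hVv
    -- CASE C : X mixed : contradiction with connectivity
    · push_neg at hB
      obtain ⟨t₀, ht₀X, ht₀0, ht₀V⟩ := hB
      have huniq : ∀ Y : Set R, IsHomogeneousSet G Y → (0:R) ∈ Y → Y.ncard = s → Y = X := by
        intro Y hYhom h0Y hYcard
        by_contra hne
        have hYX : ∀ a, a ∈ Y → a ∈ X → a = 0 := by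
          by_contra hcon
          push_neg at hcon
          obtain ⟨a, haY, haX, ha0⟩ := hcon
          set W := Y ∩ X with hWdef
          have hWhom := homog_inter hYhom hXhom
          have h0W : (0:R) ∈ W := ⟨h0Y, h0X⟩
          have haW : a ∈ W := ⟨haY, haX⟩
          have hW2 : 1 < W.ncard := (Set.one_lt_ncard W.toFinite).2 ⟨a, haW, 0, h0W, ha0⟩
          have hWle : W.ncard ≤ X.ncard := Set.ncard_le_ncard Set.inter_subset_right X.toFinite
          have hWP : P W.ncard := ⟨W, hWhom, h0W, rfl, by omega, by omega⟩
          have hsle := hmin _ hWP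
          have hWX : W = X :=
            Set.eq_of_subset_of_ncard_le Set.inter_subset_right (by omega) X.toFinite
          have hXY : X ⊆ Y := hWX ▸ Set.inter_subset_left
          exact hne (Set.eq_of_subset_of_ncard_le hXY (by omega) Y.toFinite).symm
        by_cases hYt : ∃ t ∈ Y, t ≠ 0 ∧ t ∉ Vs
        · obtain ⟨t, htY, ht0, htV⟩ := hYt
          exact disjoint_homog_contra Vs G adj h0V hVneg hXhom hYhom h0X h0Y
            (fun a haX haY => hYX a haY haX) hu₀X hu₀V htY ht0 htV
        · push_neg at hYt
          obtain ⟨y₁, hy₁Y, hy₁0⟩ := Set.exists_ne_of_one_lt_ncard (s := Y) (by omega) (0:R)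
          have hy₁V : y₁ ∈ Vs := hYt y₁ hy₁Y hy₁0
          exact disjoint_homog_contra Vs G adj h0V hVneg hYhom hXhom h0Y h0X hYX
            hy₁Y hy₁V ht₀X ht₀0 ht₀V
      have htrans : ∀ x' ∈ X, ∀ a ∈ X, a + -x' ∈ X := by
        intro x' hx' a ha
        have him : (fun a => a + -x') '' X = X := by
          apply huniq
          · exact homog_image _ (fun b => ⟨b - (-x'), by abel⟩) (adj_add _) hXhom
          · exact ⟨x', hx', by abel⟩
          · rw [Set.ncard_image_of_injective _ (add_left_injective _), hXcard]
        rw [← him]; exact ⟨a, ha, rfl⟩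
      have hmulX : ∀ (w : Rˣ), w ∈ U → ∀ a ∈ X, (w:R) * a ∈ X := by
        intro w hw a ha
        have him : (fun a => (w:R) * a) '' X = X := by
          apply huniq
          · refine homog_image _ ?_ (adj_mul w hw) hXhom
            intro b
            exact ⟨((w⁻¹:Rˣ):R) * b,
              by rw [← mul_assoc, ← Units.val_mul, mul_inv_cancel, Units.val_one, one_mul]⟩
          · exact ⟨0, h0X, mul_zero _⟩
          · rw [Set.ncard_image_of_injective _ ?_, hXcard]
            intro a b hab
            have := congrArg (fun z => ((w⁻¹:Rˣ):R) * z) hab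
            simpa [← mul_assoc, ← Units.val_mul, inv_mul_cancel] using this
        rw [← him]; exact ⟨a, ha, rfl⟩
      obtain ⟨w₀, hw₀U, hw₀⟩ := (hmemV u₀).1 hu₀V
      have h1X : (1:R) ∈ X := by
        have := hmulX w₀⁻¹ (inv_mem hw₀U) u₀ hu₀X
        rwa [← hw₀, ← Units.val_mul, inv_mul_cancel, Units.val_one] at this
      have hVX : ∀ u ∈ Vs, u ∈ X := by
        rintro u ⟨w, hw, rfl⟩
        have := hmulX w hw 1 h1X
        rwa [mul_one] at this
      have hXuniv : ∀ v : R, v ∈ X := by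
        intro v
        obtain ⟨w⟩ := hconn.preconnected 0 v
        refine walk_closed ?_ w h0X
        intro a ha b hab
        rw [adj] at hab
        have h1 := htrans (a - b) (hVX _ hab.2) a ha
        rwa [show a + -(a - b) = b by abel] at h1
      have hXu : X = Set.univ := Set.eq_univ_of_forall hXuniv
      rw [hXu, Set.ncard_univ, Nat.card_eq_fintype_card] at hXcard
      omega


end Aux

open scoped Classical in
theorem stmt10 {R : Type*} [Ring R] [Fintype R] [DecidableEq R]
    (U : Subgroup Rˣ) (hU : -1 ∈ U)
    (hconn : (cayleyGraph (unitsSet R U)).Connected)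
    (hanti : (cayleyGraph (unitsSet R U))ᶜ.Connected)
    (hnotprime : ¬ IsPrimeGraph (cayleyGraph (unitsSet R U))) :
    (Matrix.of fun a b : R => if a - b ∈ unitsSet R U then (1 : ℂ) else 0).det = 0 := by
  obtain ⟨d, hd0, hd⟩ := key_units_stab U hU hconn hanti hnotprime
  apply Matrix.det_zero_of_row_eq hd0 (M := Matrix.of fun a b : R => if a - b ∈ unitsSet R U then (1 : ℂ) else 0) (i := d) (j := 0)
  funext c
  have h1 : d - c = -c + d := by rw [sub_eq_add_neg, add_comm]
  have h2 : (0 : R) - c = -c := zero_sub c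
  have h3 : d - c ∈ unitsSet R U ↔ (0:R) - c ∈ unitsSet R U := by
    rw [h1, h2]; exact hd (-c)
  simp only [Matrix.of_apply]
  exact if_congr h3 rfl rfl
end

section
/- Let T be a finite commutative ring, S a finite commutative T-algebra, and R a finite S-algebra (possibly noncommutative). Suppose ψ_{R,S} : R → S is an S-linear map with ψ_{R,S}(r₁r₂) = ψ_{R,S}(r₂r₁) for all r₁, r₂ ∈ R and such that the only left ideal of R contained in ker ψ_{R,S} is the zero ideal, and suppose ψ_{S,T} : S → T is a T-linear map such that the only ideal of S contained in ker ψ_{S,T} is the zero ideal. Then the composite ψ_{S,T} ∘ ψ_{R,S} : R → T is T-linear, satisfies (ψ_{S,T} ∘ ψ_{R,S})(r₁r₂) = (ψ_{S,T} ∘ ψ_{R,S})(r₂r₁) for all r₁, r₂ ∈ R, and the only left ideal of R contained in its kernel is the zero ideal. -/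
theorem stmt12 {T S R : Type*} [CommRing T] [CommRing S] [Ring R]
    [Fintype T] [Fintype S] [Fintype R]
    [Algebra T S] [Algebra S R] [Algebra T R] [IsScalarTower T S R]
    (ψRS : R →ₗ[S] S)
    (hsym : ∀ r₁ r₂ : R, ψRS (r₁ * r₂) = ψRS (r₂ * r₁))
    (hker : ∀ I : Ideal R, (∀ x ∈ I, ψRS x = 0) → I = ⊥)
    (ψST : S →ₗ[T] T)
    (hker' : ∀ J : Ideal S, (∀ x ∈ J, ψST x = 0) → J = ⊥) :
    (∀ (t : T) (x : R), ψST (ψRS (t • x)) = t • ψST (ψRS x)) ∧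
    (∀ r₁ r₂ : R, ψST (ψRS (r₁ * r₂)) = ψST (ψRS (r₂ * r₁))) ∧
    (∀ I : Ideal R, (∀ x ∈ I, ψST (ψRS x) = 0) → I = ⊥) := by
  refine ⟨?_, ?_, ?_⟩
  · intro t x
    rw [← algebraMap_smul S t x, map_smul, algebraMap_smul, map_smul]
  · intro r₁ r₂
    rw [hsym]
  · intro I hI
    have hJ : (Submodule.map ψRS (I.restrictScalars S) : Ideal S) = ⊥ := by
      apply hker'
      rintro x ⟨y, hy, rfl⟩
      exact hI y hy
    apply hker
    intro x hx
    have : ψRS x ∈ (Submodule.map ψRS (I.restrictScalars S) : Ideal S) :=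
      ⟨x, hx, rfl⟩
    rw [hJ] at this
    exact this
end

section
/- Let F be a finite field with q elements and n ≥ 1. Consider the equivalence relation on M_n(F) defined by A ∼ B if and only if there exist P, Q ∈ M_n(F) with det P = det Q = 1 such that A = P B Q. Then the number of equivalence classes (i.e., the cardinality of the double quotient SL_n(F) \ M_n(F) / SL_n(F)) is exactly n + q - 1. -/
/-!
Determinant and rank are invariant under `A ↦ P * A * Q` with `det P = det Q = 1`, and together
they are a complete invariant. An invertible `A` equals `(A * B⁻¹) * B * 1` whenever
`det A = det B`. Two singular matrices of the same rank are `GL × GL`-equivalent by the rank normal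
form, and the determinants of the two invertible factors can be absorbed, since a singular `A`
satisfies `A * U = A` for matrices `U` of every determinant (`U = 1 + v wᵀ` with `A v = 0`). So the
classes are indexed by the ranks `0, …, n - 1` and by `det ∈ Fˣ`: there are `n + (q - 1)` of them.
-/

namespace Matrix

section CommRing

variable {m R : Type*} [Fintype m] [DecidableEq m] [CommRing R]

def IsSLEquiv (A B : Matrix m m R) : Prop :=
  ∃ P Q : Matrix m m R, P.det = 1 ∧ Q.det = 1 ∧ A = P * B * Q

theorem IsSLEquiv.symm {A B : Matrix m m R} (h : IsSLEquiv A B) : IsSLEquiv B A := by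
  obtain ⟨P, Q, hP, hQ, rfl⟩ := h
  refine ⟨P⁻¹, Q⁻¹, by simp [det_nonsing_inv, hP], by simp [det_nonsing_inv, hQ], ?_⟩
  rw [← Matrix.mul_assoc, ← Matrix.mul_assoc, nonsing_inv_mul _ (hP ▸ isUnit_one), Matrix.one_mul,
    Matrix.mul_assoc, mul_nonsing_inv _ (hQ ▸ isUnit_one), Matrix.mul_one]

theorem IsSLEquiv.det_eq {A B : Matrix m m R} (h : IsSLEquiv A B) : A.det = B.det := by
  obtain ⟨P, Q, hP, hQ, rfl⟩ := h
  rw [det_mul, det_mul, hP, hQ, one_mul, mul_one]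

theorem IsSLEquiv.rank_eq {A B : Matrix m m R} (h : IsSLEquiv A B) : A.rank = B.rank := by
  obtain ⟨P, Q, hP, hQ, rfl⟩ := h
  rw [rank_mul_eq_left_of_isUnit_det _ _ (hQ ▸ isUnit_one),
    rank_mul_eq_right_of_isUnit_det _ _ (hP ▸ isUnit_one)]

theorem isSLEquiv_of_det_eq {A B : Matrix m m R} (hB : IsUnit B.det) (h : A.det = B.det) :
    IsSLEquiv A B := by
  refine ⟨A * B⁻¹, 1, ?_, det_one, ?_⟩
  · rw [det_mul, h, ← det_mul, mul_nonsing_inv _ hB, det_one]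
  · rw [mul_one, Matrix.mul_assoc, nonsing_inv_mul _ hB, mul_one]

end CommRing

section Field

variable {m K : Type*} [Fintype m] [DecidableEq m] [Field K]

theorem rank_lt_card_of_det_eq_zero {A : Matrix m m K} (hA : A.det = 0) :
    A.rank < Fintype.card m := by
  refine lt_of_le_of_ne (rank_le_card_width A) fun h => ?_
  have hrange : LinearMap.range A.mulVecLin = ⊤ :=
    Submodule.eq_top_of_finrank_eq (by rw [Module.finrank_fintype_fun_eq_card]; exact h)
  have hunit := mulVec_surjective_iff_isUnit.1 (LinearMap.range_eq_top.1 hrange)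
  exact not_isUnit_zero (hA ▸ (isUnit_iff_isUnit_det A).1 hunit)

theorem exists_det_eq_and_mul_right_eq_self {A : Matrix m m K} (hA : A.det = 0) (c : K) :
    ∃ U : Matrix m m K, U.det = c ∧ A * U = A := by
  obtain ⟨v, hv, hAv⟩ := exists_mulVec_eq_zero_iff.2 hA
  obtain ⟨i, hi⟩ := Function.ne_iff.1 hv
  refine ⟨1 + vecMulVec v (Pi.single i ((c - 1) / v i)), ?_, ?_⟩
  · rw [vecMulVec_eq Unit, det_one_add_replicateCol_mul_replicateRow, single_dotProduct,
      div_mul_cancel₀ _ hi, add_sub_cancel]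
  · rw [Matrix.mul_add, mul_one, mul_vecMulVec, hAv, zero_vecMulVec, add_zero]

theorem exists_det_eq_and_mul_left_eq_self {A : Matrix m m K} (hA : A.det = 0) (c : K) :
    ∃ U : Matrix m m K, U.det = c ∧ U * A = A := by
  obtain ⟨U, hU, hAU⟩ :=
    exists_det_eq_and_mul_right_eq_self (A := Aᵀ) (by rwa [det_transpose]) c
  refine ⟨Uᵀ, by rwa [det_transpose], ?_⟩
  rw [← transpose_transpose A, ← transpose_mul, hAU]

theorem exists_mul_mul_eq_of_rank_eq {A B : Matrix m m K} (h : A.rank = B.rank) :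
    ∃ V U : Matrix m m K, IsUnit V ∧ IsUnit U ∧ V * A * U = B := by
  obtain ⟨V₁, U₁, e₁, hV₁, hU₁, hA⟩ := exists_rank_normal_form A
  obtain ⟨V₂, U₂, e₂, ⟨V₂, rfl⟩, ⟨U₂, rfl⟩, hB⟩ := exists_rank_normal_form B
  revert e₁
  rw [h]
  intro e₁ hA
  -- the permutation matrices carrying one normal form to the other
  set P : Matrix m m K := (1 : Matrix _ _ K).submatrix e₂ e₁
  set Q : Matrix m m K := (1 : Matrix _ _ K).submatrix e₁ e₂
  have hPQ : P * Q = 1 := by rw [submatrix_mul_equiv, Matrix.one_mul, submatrix_one_equiv]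
  have hQP : Q * P = 1 := by rw [submatrix_mul_equiv, Matrix.one_mul, submatrix_one_equiv]
  refine ⟨(↑V₂⁻¹ : Matrix m m K) * P * V₁, U₁ * Q * (↑U₂⁻¹ : Matrix m m K),
    ((Units.isUnit _).mul ⟨⟨P, Q, hPQ, hQP⟩, rfl⟩).mul hV₁,
    (hU₁.mul ⟨⟨Q, P, hQP, hPQ⟩, rfl⟩).mul (Units.isUnit _), ?_⟩
  calc _ = ↑V₂⁻¹ * (P * (V₁ * A * U₁) * Q) * ↑U₂⁻¹ := by simp only [Matrix.mul_assoc]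
    _ = ↑V₂⁻¹ * (↑V₂ * B * ↑U₂) * ↑U₂⁻¹ := by
        rw [hA, hB, submatrix_mul_equiv, submatrix_mul_equiv, Matrix.one_mul, Matrix.mul_one]
    _ = B := by simp [Matrix.mul_assoc]

theorem isSLEquiv_of_rank_eq {A B : Matrix m m K} (hA : A.det = 0) (h : A.rank = B.rank) :
    IsSLEquiv A B := by
  refine IsSLEquiv.symm ?_
  obtain ⟨V, U, hV, hU, rfl⟩ := exists_mul_mul_eq_of_rank_eq h
  have hVdet := ((isUnit_iff_isUnit_det V).1 hV).ne_zero
  have hUdet := ((isUnit_iff_isUnit_det U).1 hU).ne_zero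
  -- a singular matrix absorbs determinants on either side
  obtain ⟨X, hX, hXA⟩ := exists_det_eq_and_mul_left_eq_self hA V.det⁻¹
  obtain ⟨Y, hY, hAY⟩ := exists_det_eq_and_mul_right_eq_self hA U.det⁻¹
  refine ⟨V * X, Y * U, by rw [det_mul, hX, mul_inv_cancel₀ hVdet],
    by rw [det_mul, hY, inv_mul_cancel₀ hUdet], ?_⟩
  rw [Matrix.mul_assoc V X A, hXA, ← Matrix.mul_assoc, Matrix.mul_assoc V A Y, hAY]

open Classical in
noncomputable def rankOrDet (A : Matrix m m K) : Fin (Fintype.card m) ⊕ Kˣ :=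
  if h : A.det = 0 then .inl ⟨A.rank, rank_lt_card_of_det_eq_zero h⟩ else .inr (Units.mk0 A.det h)

theorem IsSLEquiv.rankOrDet_eq {A B : Matrix m m K} (h : IsSLEquiv A B) :
    rankOrDet A = rankOrDet B := by
  unfold rankOrDet
  split_ifs <;> simp_all [h.det_eq, h.rank_eq]

theorem isSLEquiv_of_rankOrDet_eq {A B : Matrix m m K} (h : rankOrDet A = rankOrDet B) :
    IsSLEquiv A B := by
  by_cases hA : A.det = 0 <;> by_cases hB : B.det = 0 <;>
    simp only [rankOrDet, hA, hB, dite_true, dite_false, reduceCtorEq, Sum.inl.injEq,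
      Sum.inr.injEq, Fin.mk.injEq, Units.mk0_inj] at h
  · exact isSLEquiv_of_rank_eq hA h
  · exact isSLEquiv_of_det_eq (IsUnit.mk0 _ hB) h

theorem rankOrDet_surjective [Nonempty m] :
    Function.Surjective (rankOrDet : Matrix m m K → Fin (Fintype.card m) ⊕ Kˣ) := by
  rintro (⟨r, hr⟩ | u)
  · obtain ⟨s, -, hs⟩ := Finset.exists_subset_card_eq (s := Finset.univ) hr.le
    set D : Matrix m m K := diagonal fun i => if i ∈ s then 1 else 0
    have hrank : D.rank = r := by
      classical
      rw [rank_diagonal]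
      simp [hs]
    have hdet : D.det = 0 := by
      by_contra hdet
      exact hr.ne (hrank ▸ rank_of_det_ne_zero hdet)
    exact ⟨D, by simp [rankOrDet, hdet, hrank]⟩
  · refine ⟨diagonal (Pi.mulSingle (Classical.arbitrary m) (u : K)), ?_⟩
    simp [rankOrDet, det_diagonal, Finset.prod_pi_mulSingle']

noncomputable def quotIsSLEquivEquiv [Nonempty m] :
    Quot (IsSLEquiv (m := m) (R := K)) ≃ Fin (Fintype.card m) ⊕ Kˣ :=
  Equiv.ofBijective (Quot.lift rankOrDet fun _ _ => IsSLEquiv.rankOrDet_eq)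
    ⟨by rintro ⟨A⟩ ⟨B⟩ h; exact Quot.sound (isSLEquiv_of_rankOrDet_eq h),
      .of_comp (g := Quot.mk _) rankOrDet_surjective⟩

theorem card_quot_isSLEquiv [Nonempty m] [Finite K] :
    Nat.card (Quot (IsSLEquiv (m := m) (R := K))) = Fintype.card m + Nat.card K - 1 := by
  rw [Nat.card_congr quotIsSLEquivEquiv, Nat.card_sum, Nat.card_eq_fintype_card (α := Fin _),
    Fintype.card_fin, Nat.card_eq_card_units_add_one K]
  omega

end Field

end Matrix

theorem stmt15 {F : Type*} [Field F] [Fintype F] {n : ℕ} (hn : 1 ≤ n) :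
    Nat.card (Quot (fun A B : Matrix (Fin n) (Fin n) F =>
        ∃ P Q : Matrix (Fin n) (Fin n) F, P.det = 1 ∧ Q.det = 1 ∧ A = P * B * Q)) =
      n + Fintype.card F - 1 := by
  have : Nonempty (Fin n) := ⟨⟨0, hn⟩⟩
  have h := Matrix.card_quot_isSLEquiv (m := Fin n) (K := F)
  rwa [Fintype.card_fin, Nat.card_eq_fintype_card (α := F)] at h
end

section
/- Let F be a finite field, n ≥ 1, and R = M_n(F). Let S ⊆ R with 0 ∉ S and u s v ∈ S for all u, v ∈ GL_n(F) and s ∈ S (i.e., GL_n(F)·S·GL_n(F) = S). Then the adjacency matrix over ℂ of the Cayley graph Γ(R,S) has at most n + 1 distinct eigenvalues; that is, the set of complex numbers λ lying in the spectrum of the adjacency matrix has cardinality at most n + 1. -/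
/-!
Every additive character `χ` of the finite abelian group `M_n(F)` is an eigenvector of the
adjacency matrix, with eigenvalue `∑_{s ∈ S} χ(-s)`, and the characters form a basis, so these
sums are the whole spectrum. Fixing a primitive character `ψ` of `F`, the characters of `M_n(F)`
are exactly `X ↦ ψ(tr(A X))` for `A ∈ M_n(F)`. Since `tr(uAv X) = tr(A (v X u))` and `S` is
stable under `X ↦ v X u`, the eigenvalue attached to `A` only depends on the double coset
`GL_n(F) A GL_n(F)`, i.e. on the rank of `A`, which takes `n + 1` values.
-/

open Matrix

theorem LinearMap.spectrum_eq_range_of_map_basis_eq_smul {K V ι : Type*} [Field K]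
    [AddCommGroup V] [Module K V] [Fintype ι] [DecidableEq ι] (b : Module.Basis ι K V)
    (f : V →ₗ[K] V) (μ : ι → K) (hf : ∀ i, f (b i) = μ i • b i) :
    spectrum K f = Set.range μ := by
  have : f.toMatrix b b = diagonal μ := by
    ext i j
    rcases eq_or_ne i j with rfl | hij <;> simp [LinearMap.toMatrix_apply, *]
  rw [← LinearMap.spectrum_toMatrix f b, this, spectrum_diagonal]

section Cayley

variable {G : Type*} [AddCommGroup G] [Fintype G]

def cayleyAdjMatrix (S : Set G) [DecidablePred (· ∈ S)] : Matrix G G ℂ :=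
  of fun a b => if a - b ∈ S then 1 else 0

variable (S : Set G) [DecidablePred (· ∈ S)]

theorem cayleyAdjMatrix_mulVec_addChar (χ : AddChar G ℂ) :
    cayleyAdjMatrix S *ᵥ ⇑χ = (∑ s ∈ S.toFinset, χ (-s)) • ⇑χ := by
  ext a
  simp only [mulVec, dotProduct, cayleyAdjMatrix, of_apply, Pi.smul_apply, smul_eq_mul]
  rw [← (Equiv.subLeft a).sum_comp]
  simp [ite_mul, Finset.sum_ite, Finset.mul_sum, Set.filter_mem_univ_eq_toFinset,
    sub_eq_add_neg, AddChar.map_add_eq_mul, mul_comm]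

theorem spectrum_cayleyAdjMatrix [DecidableEq G] :
    spectrum ℂ (cayleyAdjMatrix S) =
      Set.range fun χ : AddChar G ℂ => ∑ s ∈ S.toFinset, χ (-s) := by
  rw [← spectrum_toLin']
  refine LinearMap.spectrum_eq_range_of_map_basis_eq_smul (AddChar.complexBasis G) _ _ fun χ => ?_
  rw [AddChar.coe_complexBasis, toLin'_apply, cayleyAdjMatrix_mulVec_addChar]

end Cayley

section Duality

variable {F V : Type*} [Field F] [AddCommGroup V] [Module F V] {ψ : AddChar F ℂ}

theorem AddChar.eq_zero_of_compAddMonoidHom_eq_one (hψ : ψ ≠ 1) {f : Module.Dual F V}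
    (hf : ψ.compAddMonoidHom f.toAddMonoidHom = 1) : f = 0 := by
  by_contra hf0
  obtain ⟨x, hx⟩ : ∃ x, f x = 1 := f.surjective_of_ne_zero hf0 1
  refine hψ (DFunLike.ext _ _ fun y => ?_)
  simpa [hx] using DFunLike.congr_fun hf (y • x)

theorem AddChar.bijective_compAddMonoidHom_of_injective [Fintype V] (hψ : ψ ≠ 1)
    {B : V →ₗ[F] Module.Dual F V} (hB : Function.Injective B) :
    Function.Bijective fun v => ψ.compAddMonoidHom (B v).toAddMonoidHom := by
  refine (Fintype.bijective_iff_injective_and_card _).2 ⟨fun v w hvw => ?_, AddChar.card_eq.symm⟩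
  rw [← sub_eq_zero, ← hB.eq_iff, map_zero]
  refine AddChar.eq_zero_of_compAddMonoidHom_eq_one hψ (DFunLike.ext _ _ fun x => ?_)
  have := DFunLike.congr_fun hvw x
  simp only [AddChar.compAddMonoidHom_apply, LinearMap.toAddMonoidHom_coe] at this
  simp [AddChar.map_sub_eq_div, this, (ψ.val_isUnit _).ne_zero]

end Duality

section TraceChar

variable {m F : Type*} [Fintype m] [Field F]

def Matrix.traceMulLeft : Matrix m m F →ₗ[F] Module.Dual F (Matrix m m F) :=
  LinearMap.mk₂ F (fun A X => (A * X).trace) (by simp [add_mul]) (by simp) (by simp [mul_add])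
    (by simp)

theorem Matrix.traceMulLeft_apply (A X : Matrix m m F) : traceMulLeft A X = (A * X).trace := rfl

theorem Matrix.traceMulLeft_injective :
    Function.Injective (traceMulLeft : Matrix m m F →ₗ[F] _) :=
  fun _ _ h => ext_iff_trace_mul_right.2 fun X => DFunLike.congr_fun h X

def Matrix.traceChar (ψ : AddChar F ℂ) (A : Matrix m m F) : AddChar (Matrix m m F) ℂ :=
  ψ.compAddMonoidHom (traceMulLeft A).toAddMonoidHom

theorem Matrix.traceChar_surjective [Fintype F] [DecidableEq m] {ψ : AddChar F ℂ} (hψ : ψ ≠ 1) :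
    Function.Surjective (traceChar (m := m) ψ) :=
  (AddChar.bijective_compAddMonoidHom_of_injective hψ traceMulLeft_injective).surjective

theorem units_mul_mul_mem_iff {R : Type*} [Monoid R] {S : Set R}
    (hS : ∀ u v : Rˣ, ∀ s ∈ S, (u : R) * s * v ∈ S) (u v : Rˣ) (s : R) :
    (u : R) * s * v ∈ S ↔ s ∈ S :=
  ⟨fun h => by simpa [mul_assoc] using hS u⁻¹ v⁻¹ _ h, hS u v s⟩

theorem Matrix.sum_traceChar_units_mul_mul [DecidableEq m] [Fintype F] {S : Set (Matrix m m F)}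
    [DecidablePred (· ∈ S)]
    (hS : ∀ u v : (Matrix m m F)ˣ, ∀ s ∈ S, (u : Matrix m m F) * s * v ∈ S) (ψ : AddChar F ℂ)
    (u v : (Matrix m m F)ˣ) (A : Matrix m m F) :
    ∑ s ∈ S.toFinset, traceChar ψ ((u : Matrix m m F) * A * (v : Matrix m m F)) (-s) =
      ∑ s ∈ S.toFinset, traceChar ψ A (-s) := by
  refine Finset.sum_equiv ((Units.mulLeft v).trans (Units.mulRight u))
    (by simp [units_mul_mul_mem_iff hS]) fun s _ => ?_
  simp only [traceChar, mul_assoc, AddChar.compAddMonoidHom_apply, LinearMap.toAddMonoidHom_coe,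
    traceMulLeft_apply, mul_neg, trace_neg]
  rw [trace_mul_comm]
  simp only [mul_assoc, Equiv.trans_apply, Units.mulLeft_apply, Units.mulRight_apply]

end TraceChar

section Rank

variable {m R β : Type*} [Fintype m] [DecidableEq m] [Field R] {f : Matrix m m R → β}

theorem Matrix.submatrix_equiv_eq_units_mul_mul {ι : Type*} (X : Matrix ι ι R) (e e' : m ≃ ι) :
    ∃ u v : (Matrix m m R)ˣ, X.submatrix e' e' = u * X.submatrix e e * v := by
  set σ : Equiv.Perm m := e'.trans e.symm
  have hσ : σ.permMatrix R * σ⁻¹.permMatrix R = 1 := by simp [← permMatrix_mul]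
  have hσ' : σ⁻¹.permMatrix R * σ.permMatrix R = 1 := by simp [← permMatrix_mul]
  refine ⟨⟨_, _, hσ, hσ'⟩, ⟨_, _, hσ', hσ⟩, ?_⟩
  simp [PEquiv.toMatrix_toPEquiv_mul, PEquiv.mul_toMatrix_toPEquiv, σ, Equiv.Perm.inv_def,
    Function.comp_def]

theorem Matrix.factorsThrough_rank (hf : ∀ (u v : (Matrix m m R)ˣ) A, f (u * A * v) = f A) :
    f.FactorsThrough rank := by
  have normal_form : ∀ A r, A.rank = r → ∃ e : m ≃ Fin r ⊕ Fin (Fintype.card m - r),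
      f A = f ((fromBlocks (1 : Matrix (Fin r) (Fin r) R) 0 0 0).submatrix e e) := by
    rintro A _ rfl
    obtain ⟨V, U, e, hV, hU, hA⟩ := exists_rank_normal_form A
    exact ⟨e, by rw [← hA, ← hV.unit_spec, ← hU.unit_spec, hf]⟩
  intro A B h
  obtain ⟨e, hA⟩ := normal_form A _ rfl
  obtain ⟨e', hB⟩ := normal_form B _ h.symm
  obtain ⟨u, v, huv⟩ := submatrix_equiv_eq_units_mul_mul
    (fromBlocks (1 : Matrix (Fin A.rank) (Fin A.rank) R) 0 0 0) e e'
  rw [hA, hB, huv, hf]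

end Rank

theorem Set.ncard_range_le_of_factorsThrough {α β : Type*} {g : α → β} {r : α → ℕ}
    (hg : g.FactorsThrough r) {n : ℕ} (hr : ∀ a, r a ≤ n) : (Set.range g).ncard ≤ n + 1 := by
  rcases isEmpty_or_nonempty α with _ | ⟨⟨a₀⟩⟩
  · simp [Set.range_eq_empty]
  calc (Set.range g).ncard ≤ (Function.extend r g (fun _ => g a₀) '' Set.Iic n).ncard :=
        Set.ncard_le_ncard (by rintro _ ⟨a, rfl⟩; exact ⟨r a, hr a, hg.extend_apply _ a⟩)
    _ ≤ (Set.Iic n).ncard := Set.ncard_image_le (Set.finite_Iic n)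
    _ = n + 1 := by simp

open scoped Classical in
theorem stmt16_general {F : Type*} [Field F] [Fintype F] {n : ℕ}
    (S : Set (Matrix (Fin n) (Fin n) F))
    (hstab : ∀ u v : (Matrix (Fin n) (Fin n) F)ˣ, ∀ s ∈ S,
      (u : Matrix (Fin n) (Fin n) F) * s * (v : Matrix (Fin n) (Fin n) F) ∈ S) :
    (spectrum ℂ (Matrix.of fun a b : Matrix (Fin n) (Fin n) F =>
        if a - b ∈ S then (1 : ℂ) else 0)).ncard ≤ n + 1 := by
  set ψ := AddChar.FiniteField.primitiveChar_to_Complex F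
  have hψ : ψ ≠ 1 := by
    simpa using AddChar.FiniteField.primitiveChar_to_Complex_isPrimitive F one_ne_zero
  change (spectrum ℂ (cayleyAdjMatrix S)).ncard ≤ n + 1
  rw [spectrum_cayleyAdjMatrix, ← (traceChar_surjective hψ).range_comp]
  exact Set.ncard_range_le_of_factorsThrough
    (factorsThrough_rank fun u v A => sum_traceChar_units_mul_mul hstab ψ u v A)
    fun A => A.rank_le_card_width.trans (by simp)

open scoped Classical in
theorem stmt16 {F : Type*} [Field F] [Fintype F] {n : ℕ} (hn : 1 ≤ n)
    (S : Set (Matrix (Fin n) (Fin n) F))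
    (h0 : (0 : Matrix (Fin n) (Fin n) F) ∉ S)
    (hstab : ∀ u v : (Matrix (Fin n) (Fin n) F)ˣ, ∀ s ∈ S,
      (u : Matrix (Fin n) (Fin n) F) * s * (v : Matrix (Fin n) (Fin n) F) ∈ S) :
    (spectrum ℂ (Matrix.of fun a b : Matrix (Fin n) (Fin n) F =>
        if a - b ∈ S then (1 : ℂ) else 0)).ncard ≤ n + 1 :=
  stmt16_general S hstab
end
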